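/- arXiv:2411.05866 — 6 statements merged into one kernel-verified Lean document; each statement's English description precedes it below -/
import Mathlib

section
/- Let α, β ∈ C¹([0,L]×[0,∞)) satisfy ∂_t α + λ₁ ∂_x α = 0, ∂_t β − λ₂ ∂_x β = 0, and the boundary coupling α(0,t) = −r β(0,t) for all t ≥ 0, and suppose the boundary value at x = L is only approximately zero: |β(L,t)| ≤ ε for all t ≥ 0. Then for every ν > 0 there exist constants C₁ > 0 and C₂ > 0, depending only on λ₁, λ₂, r, L and ν, such that for all t ≥ 0: ∫₀^L (α(x,t)² + β(x,t)²) dx ≤ C₁ e^{−ν t} ∫₀^L (α(x,0)² + β(x,0)²) dx + C₂ ε². That is, the target system with an ε-approximate boundary control is locally practically exponentially stable in L². -/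
/-!
Solutions are constant along the characteristics `x - λ₁ t` and `x + λ₂ t`. Following a
characteristic back, `α(x,t)` is either initial data of `α`, or, via the coupling at `x = 0`,
`-r β(0,·)`, which in turn is either initial data of `β` or a boundary value at `x = L`, bounded
by `ε`. The resulting pointwise bounds integrate (after an affine change of variables) to a bound
on the energy `E(t) = ∫₀ᴸ (α² + β²)(x,t) dx`, namely
`E(t) ≤ (1 + r² λ₁/λ₂) E(0) + (r² + 1) L ε²`. After time `T = L/λ₁ + L/λ₂` every characteristic
through `[0, L]` comes from the boundary `x = L`, so then `E(t) ≤ (r² + 1) L ε²`; the jump at `T`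
is absorbed by `C₁ = (1 + r² λ₁/λ₂) e^{νT}`.
-/

open Set Real MeasureTheory

def IsTransportSolution (L c : ℝ) (u : ℝ → ℝ → ℝ) : Prop :=
  ContDiffOn ℝ 1 (fun p : ℝ × ℝ => u p.1 p.2) (Icc 0 L ×ˢ Ici 0) ∧
    ∀ x ∈ Ioo (0:ℝ) L, ∀ t ∈ Ioi (0:ℝ),
      deriv (fun s => u x s) t + c * deriv (fun y => u y t) x = 0

lemma add_mul_mem_Icc_of_mem_Icc {L x c d s : ℝ} (hx : x ∈ Icc 0 L)
    (hxd : x + c * d ∈ Icc 0 L) (hs : s ∈ Icc 0 d) : x + c * s ∈ Icc 0 L := by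
  obtain ⟨hx0, hxL⟩ := hx
  obtain ⟨hxd0, hxdL⟩ := hxd
  obtain ⟨hs0, hsd⟩ := hs
  rcases le_total c 0 with hc | hc
  · constructor <;> nlinarith
  · constructor <;> nlinarith

lemma add_mul_mem_Ioo_of_mem_Icc {L x c d s : ℝ} (hc : c ≠ 0) (hx : x ∈ Icc 0 L)
    (hxd : x + c * d ∈ Icc 0 L) (hs : s ∈ Ioo 0 d) : x + c * s ∈ Ioo 0 L := by
  obtain ⟨hx0, hxL⟩ := hx
  obtain ⟨hxd0, hxdL⟩ := hxd
  obtain ⟨hs0, hsd⟩ := hs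
  rcases hc.lt_or_gt with hc | hc
  · constructor <;> nlinarith
  · constructor <;> nlinarith

lemma intervalIntegral_comp_mul_add_le {g : ℝ → ℝ} (hg : Integrable g) (hg0 : ∀ y, 0 ≤ g y)
    {a b c d : ℝ} (ha : a ≠ 0) (hcd : c ≤ d) :
    ∫ x in c..d, g (a * x + b) ≤ |a|⁻¹ * ∫ y, g y := by
  have hcomp : Integrable fun x => g (a * x + b) := (hg.comp_add_right b).comp_mul_left' ha
  calc ∫ x in c..d, g (a * x + b) ≤ ∫ x, g (a * x + b) := by
        rw [intervalIntegral.integral_of_le hcd]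
        exact setIntegral_le_integral hcomp
          (Filter.Eventually.of_forall fun x => hg0 (a * x + b))
    _ = |a|⁻¹ * ∫ y, g y := by
        have := Measure.integral_comp_mul_left (fun x => g (x + b)) a
        rw [integral_add_right_eq_self, abs_inv, smul_eq_mul] at this
        exact this

namespace IsTransportSolution

variable {L c : ℝ} {u : ℝ → ℝ → ℝ}

lemma hasDerivAt_characteristic (hu : IsTransportSolution L c u) {x t s : ℝ}
    (hx : x + c * s ∈ Ioo 0 L) (ht : 0 < t + s) :
    HasDerivAt (fun σ => u (x + c * σ) (t + σ)) 0 s := by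
  set p : ℝ × ℝ := (x + c * s, t + s)
  have hp : Icc 0 L ×ˢ Ici 0 ∈ nhds p :=
    Filter.mem_of_superset ((isOpen_Ioo.prod isOpen_Ioi).mem_nhds ⟨hx, ht⟩)
      (prod_mono Ioo_subset_Icc_self Ioi_subset_Ici_self)
  have hD := ((hu.1.contDiffAt hp).differentiableAt one_ne_zero).hasFDerivAt
  set D := fderiv ℝ (fun p : ℝ × ℝ => u p.1 p.2) p
  have hdx : HasDerivAt (fun y => u y (t + s)) (D (1, 0)) (x + c * s) :=
    hD.comp_hasDerivAt (f := fun y => (y, t + s)) _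
      ((hasDerivAt_id _).prodMk (hasDerivAt_const _ _))
  have hdt : HasDerivAt (fun τ => u (x + c * s) τ) (D (0, 1)) (t + s) :=
    hD.comp_hasDerivAt (f := fun τ => (x + c * s, τ)) _
      ((hasDerivAt_const _ _).prodMk (hasDerivAt_id _))
  have hline : HasDerivAt (fun σ : ℝ => (x + c * σ, t + σ)) (c, 1) s :=
    (((hasDerivAt_id s).const_mul c).const_add x |>.congr_deriv (mul_one c)).prodMk
      ((hasDerivAt_id s).const_add t)
  have hzero : D (c, 1) = 0 := by
    have hpde := hu.2 _ hx _ ht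
    rw [hdx.deriv, hdt.deriv] at hpde
    have hdecomp : ((c, 1) : ℝ × ℝ) = c • (1, 0) + (0, 1) := by simp
    rw [hdecomp, map_add, map_smul, smul_eq_mul]
    linarith
  rw [← hzero]
  exact hD.comp_hasDerivAt s hline

lemma apply_add_mul (hu : IsTransportSolution L c u) (hc : c ≠ 0) {x t d : ℝ}
    (hx : x ∈ Icc 0 L) (hxd : x + c * d ∈ Icc 0 L) (ht : 0 ≤ t) (hd : 0 ≤ d) :
    u (x + c * d) (t + d) = u x t := by
  rcases hd.eq_or_lt with rfl | hd
  · simp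
  set g := fun σ => u (x + c * σ) (t + σ)
  have hg : ContinuousOn g (Icc 0 d) :=
    hu.1.continuousOn.comp (f := fun σ => (x + c * σ, t + σ)) (by fun_prop) fun s hs =>
      ⟨add_mul_mem_Icc_of_mem_Icc hx hxd hs, by simp only [mem_Ici]; linarith [hs.1]⟩
  obtain ⟨s, -, hs⟩ := exists_hasDerivAt_eq_slope g (fun _ => 0) hd hg fun s hs =>
    hu.hasDerivAt_characteristic (add_mul_mem_Ioo_of_mem_Icc hc hx hxd hs) (by linarith [hs.1])
  rw [eq_comm, div_eq_zero_iff, sub_eq_zero, sub_eq_zero] at hs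
  simpa [g] using hs.resolve_right hd.ne'

lemma eq_sub_mul (hu : IsTransportSolution L c u) (hc : c ≠ 0) {x t s : ℝ}
    (hx : x ∈ Icc 0 L) (hxs : x - c * s ∈ Icc 0 L) (hs : 0 ≤ s) (hst : s ≤ t) :
    u x t = u (x - c * s) (t - s) := by
  have := hu.apply_add_mul hc (t := t - s) hxs (by rwa [sub_add_cancel]) (sub_nonneg.2 hst) hs
  rwa [sub_add_cancel, sub_add_cancel] at this

lemma continuousOn_slice (hu : IsTransportSolution L c u) {t : ℝ} (ht : 0 ≤ t) :
    ContinuousOn (fun x => u x t) (Icc 0 L) :=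
  hu.1.continuousOn.comp (f := fun x => (x, t)) (by fun_prop) fun _ hx => ⟨hx, ht⟩

lemma intervalIntegrable_sq (hu : IsTransportSolution L c u) {t : ℝ} (ht : 0 ≤ t)
    (hL : 0 ≤ L) : IntervalIntegrable (fun x => u x t ^ 2) volume 0 L :=
  ((hu.continuousOn_slice ht).pow 2).intervalIntegrable_of_Icc hL

end IsTransportSolution

/-- Extended by zero outside `[0, L]`, so that transported initial data can be integrated over
all of `ℝ`. -/
noncomputable def initialEnergyDensity (L : ℝ) (u : ℝ → ℝ → ℝ) : ℝ → ℝ :=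
  (Icc 0 L).indicator fun y => u y 0 ^ 2

lemma initialEnergyDensity_nonneg (L : ℝ) (u : ℝ → ℝ → ℝ) (y : ℝ) :
    0 ≤ initialEnergyDensity L u y :=
  indicator_nonneg (fun _ _ => sq_nonneg _) y

lemma initialEnergyDensity_of_mem {L y : ℝ} {u : ℝ → ℝ → ℝ} (hy : y ∈ Icc 0 L) :
    initialEnergyDensity L u y = u y 0 ^ 2 :=
  indicator_of_mem hy _

lemma initialEnergyDensity_of_notMem {L y : ℝ} {u : ℝ → ℝ → ℝ} (hy : y ∉ Icc 0 L) :
    initialEnergyDensity L u y = 0 :=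
  indicator_of_notMem hy _

lemma IsTransportSolution.integrable_initialEnergyDensity {L c : ℝ} {u : ℝ → ℝ → ℝ}
    (hu : IsTransportSolution L c u) : Integrable (initialEnergyDensity L u) :=
  (integrable_indicator_iff measurableSet_Icc).2
    ((hu.continuousOn_slice le_rfl).pow 2).integrableOn_Icc

lemma integral_initialEnergyDensity {L : ℝ} (hL : 0 ≤ L) (u : ℝ → ℝ → ℝ) :
    ∫ y, initialEnergyDensity L u y = ∫ y in 0..L, u y 0 ^ 2 := by
  rw [initialEnergyDensity, integral_indicator measurableSet_Icc, integral_Icc_eq_integral_Ioc,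
    intervalIntegral.integral_of_le hL]

noncomputable def energy (L : ℝ) (α β : ℝ → ℝ → ℝ) (t : ℝ) : ℝ :=
  ∫ x in 0..L, (α x t ^ 2 + β x t ^ 2)

section TargetSystem

variable {L lam1 lam2 r ε : ℝ} {α β : ℝ → ℝ → ℝ}

lemma IsTransportSolution.abs_le_of_abs_right_le (h2 : 0 < lam2)
    (hβ : IsTransportSolution L (-lam2) β) (hβL : ∀ t, 0 ≤ t → |β L t| ≤ ε) {x t : ℝ}
    (hx : x ∈ Icc 0 L) (hxt : L ≤ x + lam2 * t) : |β x t| ≤ ε := by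
  have hs : 0 ≤ (L - x) / lam2 := div_nonneg (sub_nonneg.2 hx.2) h2.le
  have hst : (L - x) / lam2 ≤ t := by rw [div_le_iff₀ h2]; linarith
  have hfoot : x - -lam2 * ((L - x) / lam2) = L := by field_simp; ring
  rw [hβ.eq_sub_mul (neg_ne_zero.2 h2.ne') hx (by rw [hfoot]; exact ⟨hx.1.trans hx.2, le_rfl⟩)
    hs hst, hfoot]
  exact hβL _ (sub_nonneg.2 hst)

lemma IsTransportSolution.sq_le_of_abs_right_le (h2 : 0 < lam2)
    (hβ : IsTransportSolution L (-lam2) β) (hβL : ∀ t, 0 ≤ t → |β L t| ≤ ε) {x t : ℝ}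
    (hx : x ∈ Icc 0 L) (ht : 0 ≤ t) :
    β x t ^ 2 ≤ initialEnergyDensity L β (x + lam2 * t) + ε ^ 2 := by
  rcases le_total (x + lam2 * t) L with hxt | hxt
  · have hfoot : x - -lam2 * t = x + lam2 * t := by ring
    rw [hβ.eq_sub_mul (neg_ne_zero.2 h2.ne') hx
      (by rw [hfoot]; exact ⟨by nlinarith [hx.1], hxt⟩) ht le_rfl, hfoot, sub_self,
      initialEnergyDensity_of_mem ⟨by nlinarith [hx.1], hxt⟩]
    exact le_add_of_nonneg_right (sq_nonneg ε)
  · have hb := abs_le.1 (hβ.abs_le_of_abs_right_le h2 hβL hx hxt)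
    exact (sq_le_sq' hb.1 hb.2).trans
      (le_add_of_nonneg_left (initialEnergyDensity_nonneg L β _))

lemma IsTransportSolution.sq_le_of_left_coupling (h1 : 0 < lam1) (h2 : 0 < lam2)
    (hα : IsTransportSolution L lam1 α) (hβ : IsTransportSolution L (-lam2) β)
    (hbc : ∀ t, 0 ≤ t → α 0 t = -r * β 0 t) (hβL : ∀ t, 0 ≤ t → |β L t| ≤ ε) {x t : ℝ}
    (hx : x ∈ Icc 0 L) (ht : 0 ≤ t) :
    α x t ^ 2 ≤ initialEnergyDensity L α (x - lam1 * t)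
      + r ^ 2 * (initialEnergyDensity L β (lam2 * (t - x / lam1)) + ε ^ 2) := by
  rcases le_total (lam1 * t) x with hxt | hxt
  · have hfoot : x - lam1 * t ∈ Icc 0 L := ⟨sub_nonneg.2 hxt, by nlinarith [hx.2]⟩
    rw [hα.eq_sub_mul h1.ne' hx hfoot ht le_rfl, sub_self, initialEnergyDensity_of_mem hfoot]
    exact le_add_of_nonneg_right (mul_nonneg (sq_nonneg r)
      (add_nonneg (initialEnergyDensity_nonneg L β _) (sq_nonneg ε)))
  · have hs : x / lam1 ≤ t := by rw [div_le_iff₀ h1]; linarith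
    have hfoot : x - lam1 * (x / lam1) = 0 := by field_simp; ring
    rw [hα.eq_sub_mul h1.ne' hx (by rw [hfoot]; exact ⟨le_rfl, hx.1.trans hx.2⟩)
      (div_nonneg hx.1 h1.le) hs, hfoot, hbc _ (sub_nonneg.2 hs), mul_pow, neg_sq]
    have := hβ.sq_le_of_abs_right_le h2 hβL ⟨le_rfl, hx.1.trans hx.2⟩ (sub_nonneg.2 hs)
    rw [zero_add] at this
    exact le_add_of_nonneg_of_le (initialEnergyDensity_nonneg L α _)
      (mul_le_mul_of_nonneg_left this (sq_nonneg r))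

lemma IsTransportSolution.integral_sq_le_of_abs_right_le (hL : 0 ≤ L) (h2 : 0 < lam2)
    (hβ : IsTransportSolution L (-lam2) β) (hβL : ∀ t, 0 ≤ t → |β L t| ≤ ε) {t : ℝ}
    (ht : 0 ≤ t) :
    ∫ x in 0..L, β x t ^ 2 ≤ (∫ y in 0..L, β y 0 ^ 2) + L * ε ^ 2 := by
  set B := initialEnergyDensity L β
  have hB := hβ.integrable_initialEnergyDensity
  have hshift : IntervalIntegrable (fun x => B (1 * x + lam2 * t)) volume 0 L :=
    ((hB.comp_add_right _).comp_mul_left' one_ne_zero).intervalIntegrable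
  calc ∫ x in 0..L, β x t ^ 2 ≤ ∫ x in 0..L, (B (1 * x + lam2 * t) + ε ^ 2) := by
        refine intervalIntegral.integral_mono_on hL (hβ.intervalIntegrable_sq ht hL)
          (hshift.add intervalIntegrable_const) fun x hx => ?_
        rw [one_mul]
        exact hβ.sq_le_of_abs_right_le h2 hβL hx ht
    _ = (∫ x in 0..L, B (1 * x + lam2 * t)) + L * ε ^ 2 := by
        rw [intervalIntegral.integral_add hshift intervalIntegrable_const,
          intervalIntegral.integral_const, smul_eq_mul, sub_zero]
    _ ≤ (∫ y in 0..L, β y 0 ^ 2) + L * ε ^ 2 := by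
        gcongr
        simpa [integral_initialEnergyDensity hL] using
          intervalIntegral_comp_mul_add_le hB (initialEnergyDensity_nonneg L β) one_ne_zero hL

lemma IsTransportSolution.integral_sq_le_of_left_coupling (hL : 0 ≤ L) (h1 : 0 < lam1)
    (h2 : 0 < lam2)
    (hα : IsTransportSolution L lam1 α) (hβ : IsTransportSolution L (-lam2) β)
    (hbc : ∀ t, 0 ≤ t → α 0 t = -r * β 0 t) (hβL : ∀ t, 0 ≤ t → |β L t| ≤ ε) {t : ℝ}
    (ht : 0 ≤ t) :
    ∫ x in 0..L, α x t ^ 2 ≤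
      (∫ y in 0..L, α y 0 ^ 2)
        + r ^ 2 * (lam1 / lam2 * (∫ y in 0..L, β y 0 ^ 2) + L * ε ^ 2) := by
  set A := initialEnergyDensity L α
  set B := initialEnergyDensity L β
  have hA := hα.integrable_initialEnergyDensity
  have hB := hβ.integrable_initialEnergyDensity
  have hslope : -(lam2 / lam1) ≠ 0 := neg_ne_zero.2 (div_pos h2 h1).ne'
  have hAshift : IntervalIntegrable (fun x => A (1 * x + -(lam1 * t))) volume 0 L :=
    ((hA.comp_add_right _).comp_mul_left' one_ne_zero).intervalIntegrable
  have hBshift : IntervalIntegrable (fun x => B (-(lam2 / lam1) * x + lam2 * t)) volume 0 L :=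
    ((hB.comp_add_right _).comp_mul_left' hslope).intervalIntegrable
  calc ∫ x in 0..L, α x t ^ 2
      ≤ ∫ x in 0..L,
          (A (1 * x + -(lam1 * t)) + r ^ 2 * (B (-(lam2 / lam1) * x + lam2 * t) + ε ^ 2)) := by
        refine intervalIntegral.integral_mono_on hL (hα.intervalIntegrable_sq ht hL)
          (hAshift.add ((hBshift.add intervalIntegrable_const).const_mul _)) fun x hx => ?_
        rw [show 1 * x + -(lam1 * t) = x - lam1 * t by ring,
          show -(lam2 / lam1) * x + lam2 * t = lam2 * (t - x / lam1) by field_simp; ring]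
        exact hα.sq_le_of_left_coupling h1 h2 hβ hbc hβL hx ht
    _ = (∫ x in 0..L, A (1 * x + -(lam1 * t)))
          + r ^ 2 * ((∫ x in 0..L, B (-(lam2 / lam1) * x + lam2 * t)) + L * ε ^ 2) := by
        rw [intervalIntegral.integral_add hAshift
            ((hBshift.add intervalIntegrable_const).const_mul _),
          intervalIntegral.integral_const_mul,
          intervalIntegral.integral_add hBshift intervalIntegrable_const,
          intervalIntegral.integral_const, smul_eq_mul, sub_zero]
    _ ≤ (∫ y in 0..L, α y 0 ^ 2)
          + r ^ 2 * (lam1 / lam2 * (∫ y in 0..L, β y 0 ^ 2) + L * ε ^ 2) := by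
        have hAint := intervalIntegral_comp_mul_add_le hA (initialEnergyDensity_nonneg L α)
          one_ne_zero (b := -(lam1 * t)) hL
        have hBint := intervalIntegral_comp_mul_add_le hB (initialEnergyDensity_nonneg L β)
          hslope (b := lam2 * t) hL
        rw [abs_neg, abs_of_pos (div_pos h2 h1), inv_div] at hBint
        rw [abs_one, inv_one, one_mul] at hAint
        rw [integral_initialEnergyDensity hL] at hAint hBint
        gcongr

lemma energy_le (hL : 0 ≤ L) (h1 : 0 < lam1) (h2 : 0 < lam2)
    (hα : IsTransportSolution L lam1 α) (hβ : IsTransportSolution L (-lam2) β)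
    (hbc : ∀ t, 0 ≤ t → α 0 t = -r * β 0 t) (hβL : ∀ t, 0 ≤ t → |β L t| ≤ ε) {t : ℝ}
    (ht : 0 ≤ t) :
    energy L α β t ≤
      (1 + r ^ 2 * (lam1 / lam2)) * energy L α β 0 + (r ^ 2 + 1) * L * ε ^ 2 := by
  have hsplit : ∀ s, 0 ≤ s →
      energy L α β s = (∫ x in 0..L, α x s ^ 2) + ∫ x in 0..L, β x s ^ 2 := fun s hs =>
    intervalIntegral.integral_add (hα.intervalIntegrable_sq hs hL)
      (hβ.intervalIntegrable_sq hs hL)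
  have hα0 : 0 ≤ ∫ x in 0..L, α x 0 ^ 2 :=
    intervalIntegral.integral_nonneg hL fun _ _ => sq_nonneg _
  have hαt := hα.integral_sq_le_of_left_coupling hL h1 h2 hβ hbc hβL ht
  have hβt := hβ.integral_sq_le_of_abs_right_le hL h2 hβL ht
  rw [hsplit t ht, hsplit 0 le_rfl]
  nlinarith [mul_nonneg (mul_nonneg (sq_nonneg r) (div_pos h1 h2).le) hα0]

lemma energy_le_of_transit_time_lt (hL : 0 ≤ L) (h1 : 0 < lam1) (h2 : 0 < lam2)
    (hα : IsTransportSolution L lam1 α) (hβ : IsTransportSolution L (-lam2) β)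
    (hbc : ∀ t, 0 ≤ t → α 0 t = -r * β 0 t) (hβL : ∀ t, 0 ≤ t → |β L t| ≤ ε) {t : ℝ}
    (hT : L / lam1 + L / lam2 < t) :
    energy L α β t ≤ (r ^ 2 + 1) * L * ε ^ 2 := by
  have ht : 0 ≤ t := by linarith [div_nonneg hL h1.le, div_nonneg hL h2.le]
  have hpoint : ∀ x ∈ Icc 0 L, α x t ^ 2 + β x t ^ 2 ≤ (r ^ 2 + 1) * ε ^ 2 := by
    intro x hx
    have hxα : x / lam1 ≤ L / lam1 := div_le_div_of_nonneg_right hx.2 h1.le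
    have hlam1t : L < lam1 * t := by
      rw [mul_comm, ← div_lt_iff₀ h1]; linarith [div_nonneg hL h2.le]
    have hlam2t : L < lam2 * (t - x / lam1) := by
      rw [mul_comm, ← div_lt_iff₀ h2]; linarith
    have hlam2t' : L < lam2 * t := by
      rw [mul_comm, ← div_lt_iff₀ h2]; linarith [div_nonneg hL h1.le]
    have hαx := hα.sq_le_of_left_coupling h1 h2 hβ hbc hβL hx ht
    have hβx := hβ.sq_le_of_abs_right_le h2 hβL hx ht
    rw [initialEnergyDensity_of_notMem fun h => by linarith [h.1, hx.2],
      initialEnergyDensity_of_notMem fun h => by linarith [h.2]] at hαx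
    rw [initialEnergyDensity_of_notMem fun h => by linarith [h.2, hx.1]] at hβx
    linarith
  calc energy L α β t ≤ ∫ _ in 0..L, (r ^ 2 + 1) * ε ^ 2 :=
        intervalIntegral.integral_mono_on hL
          ((hα.intervalIntegrable_sq ht hL).add (hβ.intervalIntegrable_sq ht hL))
          intervalIntegrable_const hpoint
    _ = (r ^ 2 + 1) * L * ε ^ 2 := by
        rw [intervalIntegral.integral_const, smul_eq_mul, sub_zero]; ring

end TargetSystem

/-- local practical exponential stability of the target system with
an `ε`-approximate boundary control: for every `ν > 0` there are constants
`C₁, C₂ > 0` (depending only on `λ₁, λ₂, r, L, ν`) such that any C¹ solution of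
the two transport equations with `α(0,t) = −r β(0,t)` and `|β(L,t)| ≤ ε`
satisfies `∫₀^L (α² + β²)(·,t) ≤ C₁ e^{−ν t} ∫₀^L (α² + β²)(·,0) + C₂ ε²`. -/
theorem stmt_2 (L lam1 lam2 r : ℝ)
    (hL : 0 < L) (h1 : 0 < lam1) (h2 : 0 < lam2) :
    ∀ ν > (0:ℝ), ∃ C₁ > (0:ℝ), ∃ C₂ > (0:ℝ),
      ∀ ε : ℝ, 0 ≤ ε →
      ∀ α β : ℝ → ℝ → ℝ,
        ContDiffOn ℝ 1 (fun p : ℝ × ℝ => α p.1 p.2) (Icc 0 L ×ˢ Ici 0) →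
        ContDiffOn ℝ 1 (fun p : ℝ × ℝ => β p.1 p.2) (Icc 0 L ×ˢ Ici 0) →
        (∀ x ∈ Ioo (0:ℝ) L, ∀ t ∈ Ioi (0:ℝ),
          deriv (fun s => α x s) t + lam1 * deriv (fun y => α y t) x = 0) →
        (∀ x ∈ Ioo (0:ℝ) L, ∀ t ∈ Ioi (0:ℝ),
          deriv (fun s => β x s) t - lam2 * deriv (fun y => β y t) x = 0) →
        (∀ t : ℝ, 0 ≤ t → α 0 t = -r * β 0 t) →
        (∀ t : ℝ, 0 ≤ t → |β L t| ≤ ε) →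
        ∀ t : ℝ, 0 ≤ t →
          (∫ x in (0:ℝ)..L, ((α x t) ^ 2 + (β x t) ^ 2))
            ≤ C₁ * Real.exp (-ν * t) * (∫ x in (0:ℝ)..L, ((α x 0) ^ 2 + (β x 0) ^ 2))
              + C₂ * ε ^ 2 := by
  intro ν hν
  set T := L / lam1 + L / lam2
  set K := 1 + r ^ 2 * (lam1 / lam2)
  have hK : 0 < K := by positivity
  refine ⟨K * exp (ν * T), by positivity, (r ^ 2 + 1) * L, by positivity, ?_⟩
  intro ε _ α β hαC hβC hαpde hβpde hbc hβL t ht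
  have hα : IsTransportSolution L lam1 α := ⟨hαC, hαpde⟩
  have hβ : IsTransportSolution L (-lam2) β := ⟨hβC, fun x hx s hs => by
    rw [neg_mul, ← sub_eq_add_neg]; exact hβpde x hx s hs⟩
  have hE0 : 0 ≤ energy L α β 0 :=
    intervalIntegral.integral_nonneg hL.le fun _ _ => by positivity
  change energy L α β t ≤ K * exp (ν * T) * exp (-ν * t) * energy L α β 0 + _
  rcases le_or_gt t T with htT | htT
  · have hdecay : 1 ≤ exp (ν * T) * exp (-ν * t) := by
      rw [← exp_add]; exact one_le_exp (by nlinarith)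
    have := energy_le hL.le h1 h2 hα hβ hbc hβL ht
    nlinarith [mul_le_mul_of_nonneg_left hdecay (mul_nonneg hK.le hE0)]
  · have := energy_le_of_transit_time_lt hL.le h1 h2 hα hβ hbc hβL htT
    nlinarith [mul_nonneg (by positivity : 0 ≤ K * exp (ν * T) * exp (-ν * t)) hE0]
end

section
/- Suppose K^w, K^v ∈ C¹(𝒯) solve the kernel equations, and let (w̃, ṽ) be a C¹ solution of the plant with the backstepping control U(t) = −κ w̃(L,t) + ∫₀^L K^w(L,ξ) w̃(ξ,t) dξ + ∫₀^L K^v(L,ξ) ṽ(ξ,t) dξ. Define the backstepping transformation α(x,t) = w̃(x,t) and β(x,t) = ṽ(x,t) − ∫₀^x K^w(x,ξ) w̃(ξ,t) dξ − ∫₀^x K^v(x,ξ) ṽ(ξ,t) dξ. Then (α, β) is a classical solution of the target system: ∂_t α + λ₁ ∂_x α = 0, ∂_t β − λ₂ ∂_x β = 0 on (0,L)×(0,∞), with α(0,t) = −r β(0,t) and β(L,t) = 0 for all t ≥ 0. -/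
open Set Real

open MeasureTheory Filter Topology Metric

/-!
Write `𝒦 u (x, t) = ∫₀^x K(x, ξ) u(ξ, t) dξ`, so that `β = ṽ − 𝒦_w w̃ − 𝒦_v ṽ`. Differentiating
under the integral sign and integrating by parts in `ξ` expresses `(∂_t − λ₂ ∂_x) 𝒦 u` through
boundary terms at `ξ = x` and `ξ = 0` and integrals of the plant and kernel PDE residuals. The
first kernel PDE turns the residual integral of `𝒦_w w̃` into `∫₀^x c(ξ) K^v(x, ξ) w̃(ξ, t) dξ`,
which cancels the integral of the source term of the `ṽ`-equation inside `𝒦_v ṽ`, and the second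
kernel PDE removes the residual integral of `𝒦_v ṽ`. The diagonal condition on `K^w` cancels the
source term `c(x) w̃(x, t)` itself, and `K^v(x, 0) = −K^w(x, 0)` together with
`w̃(0, t) = −r ṽ(0, t)` cancels the terms at `ξ = 0`. The boundary conditions of the target system
are immediate from the definitions and `U`.

The kernels are only `C¹` on the closed triangle, so `∂_x ∫₀^x F(x, ξ) dξ` is computed after the
substitution `ξ = x s`, which keeps every point `(y, y s)` in the triangle.
-/

def triangle (L : ℝ) : Set (ℝ × ℝ) := {p | 0 ≤ p.2 ∧ p.2 ≤ p.1 ∧ p.1 ≤ L}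

theorem convex_triangle (L : ℝ) : Convex ℝ (triangle L) := by
  rintro ⟨x, ξ⟩ ⟨hξ, hξx, hx⟩ ⟨y, η⟩ ⟨hη, hηy, hy⟩ a b ha hb hab
  refine ⟨?_, ?_, ?_⟩ <;> simp only [Prod.smul_mk, Prod.mk_add_mk, smul_eq_mul]
  · positivity
  all_goals nlinarith

theorem uniqueDiffOn_triangle {L : ℝ} (hL : 0 < L) : UniqueDiffOn ℝ (triangle L) := by
  refine uniqueDiffOn_convex (convex_triangle L)
    ⟨(2 * L / 3, L / 3), mem_interior_iff_mem_nhds.2 ?_⟩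
  have hopen : IsOpen {p : ℝ × ℝ | 0 < p.2 ∧ p.2 < p.1 ∧ p.1 < L} :=
    (isOpen_lt continuous_const continuous_snd).inter
      ((isOpen_lt continuous_snd continuous_fst).inter (isOpen_lt continuous_fst continuous_const))
  refine mem_of_superset (hopen.mem_nhds ⟨?_, ?_, ?_⟩) fun p hp => ⟨hp.1.le, hp.2.1.le, hp.2.2.le⟩
  all_goals (simp only; linarith)

theorem Set.MapsTo.eventually_mem_of_mem_Ioo {α : Type*} {γ : ℝ → α} {s : Set α} {a b r : ℝ}
    (h : MapsTo γ (Icc a b) s) (hr : r ∈ Ioo a b) : ∀ᶠ r' in 𝓝 r, γ r' ∈ s :=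
  eventually_of_mem (Ioo_mem_nhds hr.1 hr.2) fun _ h' => h (Ioo_subset_Icc_self h')

section Partials

variable {s : Set (ℝ × ℝ)} {f : ℝ → ℝ → ℝ}

-- Partial derivatives within `s`: they are `deriv` of the slice only where the coordinate line
-- through the point stays in `s` near it.
noncomputable def partialFst (s : Set (ℝ × ℝ)) (f : ℝ → ℝ → ℝ) (x y : ℝ) : ℝ :=
  fderivWithin ℝ (fun p : ℝ × ℝ => f p.1 p.2) s (x, y) (1, 0)

noncomputable def partialSnd (s : Set (ℝ × ℝ)) (f : ℝ → ℝ → ℝ) (x y : ℝ) : ℝ :=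
  fderivWithin ℝ (fun p : ℝ × ℝ => f p.1 p.2) s (x, y) (0, 1)

variable (hf : ContDiffOn ℝ 1 (fun p : ℝ × ℝ => f p.1 p.2) s)
include hf

theorem ContDiffOn.hasDerivAt_comp {γ : ℝ → ℝ × ℝ} {v : ℝ × ℝ} {r : ℝ} (hγ : HasDerivAt γ v r)
    (hmem : ∀ᶠ r' in 𝓝 r, γ r' ∈ s) :
    HasDerivAt (fun r => f (γ r).1 (γ r).2)
      (v.1 * partialFst s f (γ r).1 (γ r).2 + v.2 * partialSnd s f (γ r).1 (γ r).2) r := by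
  have h := ((hf.differentiableOn one_ne_zero _ hmem.self_of_nhds).hasFDerivWithinAt
    |>.comp_hasDerivWithinAt r hγ.hasDerivWithinAt (mapsTo_preimage γ s)).hasDerivAt hmem
  have hv : v = v.1 • ((1 : ℝ), (0 : ℝ)) + v.2 • ((0 : ℝ), (1 : ℝ)) := by ext <;> simp
  rwa [hv, map_add, map_smul, map_smul] at h

theorem ContDiffOn.hasDerivAt_fst {x y : ℝ} (hs : ∀ᶠ x' in 𝓝 x, (x', y) ∈ s) :
    HasDerivAt (fun x' => f x' y) (partialFst s f x y) x := by
  simpa using hf.hasDerivAt_comp (γ := fun x' => (x', y))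
    ((hasDerivAt_id x).prodMk (hasDerivAt_const x y)) hs

theorem ContDiffOn.hasDerivAt_snd {x y : ℝ} (hs : ∀ᶠ y' in 𝓝 y, (x, y') ∈ s) :
    HasDerivAt (fun y' => f x y') (partialSnd s f x y) y := by
  simpa using hf.hasDerivAt_comp (γ := fun y' => (x, y'))
    ((hasDerivAt_const y x).prodMk (hasDerivAt_id y)) hs

theorem ContDiffOn.continuousOn_partialFst (hs : UniqueDiffOn ℝ s) :
    ContinuousOn (fun p : ℝ × ℝ => partialFst s f p.1 p.2) s :=
  (hf.continuousOn_fderivWithin hs le_rfl).clm_apply continuousOn_const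

theorem ContDiffOn.continuousOn_partialSnd (hs : UniqueDiffOn ℝ s) :
    ContinuousOn (fun p : ℝ × ℝ => partialSnd s f p.1 p.2) s :=
  (hf.continuousOn_fderivWithin hs le_rfl).clm_apply continuousOn_const

theorem ContDiffOn.intervalIntegrable_deriv_fst (hs : UniqueDiffOn ℝ s) {γ : ℝ → ℝ × ℝ}
    {a b : ℝ} (hab : a ≤ b) (hγ : Continuous γ) (hmaps : MapsTo γ (Icc a b) s)
    (hline : ∀ r ∈ Ioo a b, ∀ᶠ x' in 𝓝 (γ r).1, (x', (γ r).2) ∈ s) :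
    IntervalIntegrable (fun r => deriv (fun x' => f x' (γ r).2) (γ r).1) volume a b :=
  (((hf.continuousOn_partialFst hs).comp hγ.continuousOn hmaps).intervalIntegrable_of_Icc
    hab).congr_uIoo fun r hr => ((hf.hasDerivAt_fst (hline r (uIoo_of_le hab ▸ hr))).deriv).symm

theorem ContDiffOn.intervalIntegrable_deriv_snd (hs : UniqueDiffOn ℝ s) {γ : ℝ → ℝ × ℝ}
    {a b : ℝ} (hab : a ≤ b) (hγ : Continuous γ) (hmaps : MapsTo γ (Icc a b) s)
    (hline : ∀ r ∈ Ioo a b, ∀ᶠ y' in 𝓝 (γ r).2, ((γ r).1, y') ∈ s) :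
    IntervalIntegrable (fun r => deriv (fun y' => f (γ r).1 y') (γ r).2) volume a b :=
  (((hf.continuousOn_partialSnd hs).comp hγ.continuousOn hmaps).intervalIntegrable_of_Icc
    hab).congr_uIoo fun r hr => ((hf.hasDerivAt_snd (hline r (uIoo_of_le hab ▸ hr))).deriv).symm

end Partials

theorem hasDerivAt_intervalIntegral_of_contDiffOn {F : ℝ → ℝ → ℝ} {U : Set ℝ} {a b y : ℝ}
    (hU : IsOpen U) (hab : a < b)
    (hF : ContDiffOn ℝ 1 (fun p : ℝ × ℝ => F p.1 p.2) (U ×ˢ Icc a b)) (hy : y ∈ U) :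
    HasDerivAt (fun y => ∫ s in a..b, F y s) (∫ s in a..b, deriv (fun y => F y s) y) y := by
  have hS : UniqueDiffOn ℝ (U ×ˢ Icc a b) := hU.uniqueDiffOn.prod (uniqueDiffOn_Icc hab)
  have hderiv : ∀ y ∈ U, ∀ s ∈ Icc a b,
      HasDerivAt (fun y => F y s) (partialFst (U ×ˢ Icc a b) F y s) y := fun y hy s hs =>
    hF.hasDerivAt_fst (by filter_upwards [hU.mem_nhds hy] with y' hy' using ⟨hy', hs⟩)
  have hF' := hF.continuousOn_partialFst hS
  obtain ⟨ε, hε, hεU⟩ := nhds_basis_closedBall.mem_iff.1 (hU.mem_nhds hy)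
  obtain ⟨C, hC⟩ := ((isCompact_closedBall y ε).prod isCompact_Icc).exists_bound_of_continuousOn
    (hF'.mono (prod_mono hεU subset_rfl))
  have hslice : ∀ y ∈ U, IntervalIntegrable (F y) volume a b := fun y hy =>
    (hF.continuousOn.uncurry_left (f := F) y hy).intervalIntegrable_of_Icc hab.le
  have hIoc : ∀ {s}, s ∈ uIoc a b → s ∈ Icc a b := fun hs =>
    Ioc_subset_Icc_self (uIoc_of_le hab.le ▸ hs)
  have key := (intervalIntegral.hasDerivAt_integral_of_dominated_loc_of_deriv_le
    (F' := partialFst (U ×ˢ Icc a b) F) (bound := fun _ => C) (ball_mem_nhds y hε)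
    (eventually_of_mem (hU.mem_nhds hy) fun y hy => (hslice y hy).def'.aestronglyMeasurable)
    (hslice y hy)
    ((hF'.uncurry_left (f := partialFst _ F) y hy).intervalIntegrable_of_Icc
      hab.le).def'.aestronglyMeasurable
    (ae_of_all _ fun s hs y' hy' => hC (y', s) ⟨ball_subset_closedBall hy', hIoc hs⟩)
    intervalIntegrable_const
    (ae_of_all _ fun s hs y' hy' => hderiv y' (hεU (ball_subset_closedBall hy')) s (hIoc hs))).2
  rwa [intervalIntegral.integral_congr fun s hs => (hderiv y hy s (uIcc_of_le hab.le ▸ hs)).deriv]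

section Triangle

variable {F : ℝ → ℝ → ℝ} {L x : ℝ}

theorem integral_deriv_ray_triangle
    (hF : ContDiffOn ℝ 1 (fun p : ℝ × ℝ => F p.1 p.2) (triangle L)) (hx : x ∈ Ioo 0 L) :
    ∫ s in (0 : ℝ)..1, (F x (x * s) + x * (s * partialSnd (triangle L) F x (x * s))) = F x x := by
  have hmaps : MapsTo (fun s => (x, x * s)) (Icc 0 1) (triangle L) := fun s hs =>
    ⟨mul_nonneg hx.1.le hs.1, mul_le_of_le_one_right hx.1.le hs.2, hx.2.le⟩
  have hray : ∀ s ∈ Ioo (0 : ℝ) 1,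
      HasDerivAt (fun s => s * F x (x * s))
        (F x (x * s) + x * (s * partialSnd (triangle L) F x (x * s))) s := by
    intro s hs
    have h := hF.hasDerivAt_comp (γ := fun s => (x, x * s)) (v := (0, x))
      ((hasDerivAt_const s x).prodMk (by simpa using (hasDerivAt_id s).const_mul x))
      (hmaps.eventually_mem_of_mem_Ioo hs)
    exact ((hasDerivAt_id' s).mul h).congr_deriv (by simp; ring)
  have hcont : ContinuousOn (fun s => (x, x * s)) (Icc 0 1) := by fun_prop
  have := intervalIntegral.integral_eq_sub_of_hasDerivAt_of_le zero_le_one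
    (continuousOn_id.mul (hF.continuousOn.comp hcont hmaps)) hray
    ((hF.continuousOn.comp hcont hmaps).add (continuousOn_const.mul (continuousOn_id.mul
      ((hF.continuousOn_partialSnd (uniqueDiffOn_triangle (hx.1.trans hx.2))).comp hcont hmaps)))
      |>.intervalIntegrable_of_Icc zero_le_one)
  simpa using this

theorem hasDerivAt_integral_triangle
    (hF : ContDiffOn ℝ 1 (fun p : ℝ × ℝ => F p.1 p.2) (triangle L)) (hx : x ∈ Ioo 0 L) :
    HasDerivAt (fun y => ∫ ξ in (0 : ℝ)..y, F y ξ)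
      (F x x + ∫ ξ in (0 : ℝ)..x, deriv (fun y => F y ξ) x) x := by
  have hscale : ∀ y (g : ℝ → ℝ), ∫ ξ in (0 : ℝ)..y, g ξ = y * ∫ s in (0 : ℝ)..1, g (y * s) :=
    fun y g => by simp
  have hmaps : MapsTo (fun p : ℝ × ℝ => (p.1, p.1 * p.2)) (Ioo 0 L ×ˢ Icc 0 1) (triangle L) :=
    fun p hp => ⟨mul_nonneg hp.1.1.le hp.2.1, mul_le_of_le_one_right hp.1.1.le hp.2.2, hp.1.2.le⟩
  have hray : ∀ s ∈ Icc (0 : ℝ) 1, deriv (fun y => F y (y * s)) x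
      = partialFst (triangle L) F x (x * s) + s * partialSnd (triangle L) F x (x * s) := by
    intro s hs
    have h := hF.hasDerivAt_comp (γ := fun y => (y, y * s)) (v := (1, s))
      ((hasDerivAt_id x).prodMk (by simpa using (hasDerivAt_id x).mul_const s))
      (eventually_of_mem (Ioo_mem_nhds hx.1 hx.2) fun y hy => hmaps (x := (y, s)) ⟨hy, hs⟩)
    simpa using h.deriv
  have hG := hasDerivAt_intervalIntegral_of_contDiffOn isOpen_Ioo zero_lt_one
    (F := fun y s => F y (y * s)) (hF.comp (by fun_prop) hmaps) hx
  rw [intervalIntegral.integral_congr fun s hs =>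
    hray s (by rwa [uIcc_of_le zero_le_one] at hs)] at hG
  have hray_maps : MapsTo (fun s => (x, x * s)) (Icc 0 1) (triangle L) := fun s hs =>
    hmaps (x := (x, s)) ⟨hx, hs⟩
  have hray_cont : ContinuousOn (fun s => (x, x * s)) (Icc 0 1) := by fun_prop
  have hT := uniqueDiffOn_triangle (hx.1.trans hx.2)
  have iF : IntervalIntegrable (fun s => F x (x * s)) volume 0 1 :=
    (hF.continuousOn.comp hray_cont hray_maps).intervalIntegrable_of_Icc zero_le_one
  have iP : IntervalIntegrable (fun s => partialFst (triangle L) F x (x * s)) volume 0 1 :=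
    ((hF.continuousOn_partialFst hT).comp hray_cont hray_maps).intervalIntegrable_of_Icc zero_le_one
  have iQ : IntervalIntegrable (fun s => s * partialSnd (triangle L) F x (x * s)) volume 0 1 :=
    (continuousOn_id.mul ((hF.continuousOn_partialSnd hT).comp hray_cont hray_maps)
      ).intervalIntegrable_of_Icc zero_le_one
  have hpartial : ∀ s ∈ Ioo (0 : ℝ) 1,
      deriv (fun y => F y (x * s)) x = partialFst (triangle L) F x (x * s) := fun s hs =>
    (hF.hasDerivAt_fst (eventually_of_mem (Ioo_mem_nhds (mul_lt_of_lt_one_right hx.1 hs.2) hx.2)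
      fun y hy => ⟨mul_nonneg hx.1.le hs.1.le, hy.1.le, hy.2.le⟩)).deriv
  rw [funext fun y => hscale y (F y)]
  refine ((hasDerivAt_id' x).mul hG).congr_deriv ?_
  rw [hscale x, ← integral_deriv_ray_triangle hF hx,
    intervalIntegral.integral_congr_Ioo_of_le zero_le_one hpartial,
    intervalIntegral.integral_add iF (iQ.const_mul x), intervalIntegral.integral_const_mul,
    intervalIntegral.integral_add iP iQ]
  ring

end Triangle

theorem mapsTo_slice_triangle {L x : ℝ} (hx : x ≤ L) :
    MapsTo (fun ξ => (x, ξ)) (Icc 0 x) (triangle L) :=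
  fun _ hξ => ⟨hξ.1, hξ.2, hx⟩

theorem mapsTo_slice_strip {L x t : ℝ} (hx : x ≤ L) (ht : 0 ≤ t) :
    MapsTo (fun ξ => (ξ, t)) (Icc 0 x) (Icc 0 L ×ˢ Ici 0) :=
  fun _ hξ => ⟨⟨hξ.1, hξ.2.trans hx⟩, ht⟩

noncomputable def volterra (K u : ℝ → ℝ → ℝ) (x t : ℝ) : ℝ := ∫ ξ in (0 : ℝ)..x, K x ξ * u ξ t

section Volterra

variable {K u : ℝ → ℝ → ℝ} {L x t : ℝ}
  (hK : ContDiffOn ℝ 1 (fun p : ℝ × ℝ => K p.1 p.2) (triangle L))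
  (hu : ContDiffOn ℝ 1 (fun p : ℝ × ℝ => u p.1 p.2) (Icc 0 L ×ˢ Ici 0))
include hK hu

theorem hasDerivAt_volterra_time (hx : x ∈ Ioc 0 L) (ht : 0 < t) :
    HasDerivAt (fun s => volterra K u x s)
      (∫ ξ in (0 : ℝ)..x, K x ξ * deriv (fun s => u ξ s) t) t := by
  have hKmaps : MapsTo (fun p : ℝ × ℝ => (x, p.2)) (Ioi 0 ×ˢ Icc 0 x) (triangle L) :=
    fun p hp => ⟨hp.2.1, hp.2.2, hx.2⟩
  have humaps : MapsTo (fun p : ℝ × ℝ => (p.2, p.1)) (Ioi 0 ×ˢ Icc 0 x) (Icc 0 L ×ˢ Ici 0) :=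
    fun p hp => ⟨⟨hp.2.1, hp.2.2.trans hx.2⟩, Ioi_subset_Ici_self hp.1⟩
  have h := hasDerivAt_intervalIntegral_of_contDiffOn (F := fun s ξ => K x ξ * u ξ s) isOpen_Ioi
    hx.1 ((hK.comp (by fun_prop) hKmaps).mul (hu.comp (by fun_prop) humaps)) ht
  simpa only [volterra, deriv_const_mul_field] using h

theorem hasDerivAt_volterra_space (hx : x ∈ Ioo 0 L) (ht : 0 ≤ t) :
    HasDerivAt (fun y => volterra K u y t)
      (K x x * u x t + ∫ ξ in (0 : ℝ)..x, deriv (fun y => K y ξ) x * u ξ t) x := by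
  have humaps : MapsTo (fun p : ℝ × ℝ => (p.2, t)) (triangle L) (Icc 0 L ×ˢ Ici 0) :=
    fun p hp => ⟨⟨hp.1, hp.2.1.trans hp.2.2⟩, ht⟩
  have h := hasDerivAt_integral_triangle (F := fun y ξ => K y ξ * u ξ t)
    (hK.mul (hu.comp (by fun_prop) humaps)) hx
  simpa only [volterra, deriv_mul_const_field] using h

theorem integral_mul_deriv_space_eq (hx : x ∈ Ioc 0 L) (ht : 0 ≤ t) :
    ∫ ξ in (0 : ℝ)..x, K x ξ * deriv (fun y => u y t) ξ
      = K x x * u x t - K x 0 * u 0 t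
        - ∫ ξ in (0 : ℝ)..x, deriv (fun s => K x s) ξ * u ξ t := by
  have hL : 0 < L := hx.1.trans_le hx.2
  have hKmaps := mapsTo_slice_triangle (L := L) hx.2
  have humaps := mapsTo_slice_strip hx.2 ht
  have hIoo : Ioo (min 0 x) (max 0 x) = Ioo 0 x := by simp [hx.1.le]
  refine intervalIntegral.integral_mul_deriv_eq_deriv_mul_of_hasDerivAt
    ((uIcc_of_le hx.1.le).symm ▸ hK.continuousOn.comp (by fun_prop) hKmaps)
    ((uIcc_of_le hx.1.le).symm ▸ hu.continuousOn.comp (by fun_prop) humaps)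
    (fun ξ hξ => (hK.hasDerivAt_snd
      (hKmaps.eventually_mem_of_mem_Ioo (hIoo ▸ hξ))).differentiableAt.hasDerivAt)
    (fun ξ hξ => (hu.hasDerivAt_fst
      (humaps.eventually_mem_of_mem_Ioo (hIoo ▸ hξ))).differentiableAt.hasDerivAt)
    (hK.intervalIntegrable_deriv_snd (uniqueDiffOn_triangle hL) hx.1.le (by fun_prop) hKmaps
      fun _ => hKmaps.eventually_mem_of_mem_Ioo)
    (hu.intervalIntegrable_deriv_fst ((uniqueDiffOn_Icc hL).prod (uniqueDiffOn_Ici 0)) hx.1.le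
      (by fun_prop) humaps fun _ => humaps.eventually_mem_of_mem_Ioo)

theorem intervalIntegrable_mul_deriv_strip (hx : x ∈ Ioc 0 L) (ht : 0 < t) :
    IntervalIntegrable (fun ξ => K x ξ * deriv (fun s => u ξ s) t) volume 0 x ∧
      IntervalIntegrable (fun ξ => K x ξ * deriv (fun y => u y t) ξ) volume 0 x := by
  have hS : UniqueDiffOn ℝ (Icc 0 L ×ˢ Ici (0 : ℝ)) :=
    (uniqueDiffOn_Icc (hx.1.trans_le hx.2)).prod (uniqueDiffOn_Ici 0)
  have humaps := mapsTo_slice_strip hx.2 ht.le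
  have hKc : ContinuousOn (fun ξ => K x ξ) (uIcc 0 x) :=
    uIcc_of_le hx.1.le ▸ hK.continuousOn.comp (by fun_prop) (mapsTo_slice_triangle hx.2)
  refine ⟨(hu.intervalIntegrable_deriv_snd hS hx.1.le (by fun_prop) humaps fun ξ hξ =>
      eventually_of_mem (Ioi_mem_nhds ht) fun s hs =>
        ⟨(humaps (Ioo_subset_Icc_self hξ)).1, Ioi_subset_Ici_self hs⟩).continuousOn_mul hKc,
    (hu.intervalIntegrable_deriv_fst hS hx.1.le (by fun_prop) humaps
      fun _ => humaps.eventually_mem_of_mem_Ioo).continuousOn_mul hKc⟩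

theorem intervalIntegrable_deriv_triangle_mul (hx : x ∈ Ioo 0 L) (ht : 0 ≤ t) :
    IntervalIntegrable (fun ξ => deriv (fun y => K y ξ) x * u ξ t) volume 0 x ∧
      IntervalIntegrable (fun ξ => deriv (fun s => K x s) ξ * u ξ t) volume 0 x := by
  have hT := uniqueDiffOn_triangle (hx.1.trans hx.2)
  have hKmaps := mapsTo_slice_triangle (L := L) hx.2.le
  have huc : ContinuousOn (fun ξ => u ξ t) (uIcc 0 x) :=
    uIcc_of_le hx.1.le ▸ hu.continuousOn.comp (by fun_prop) (mapsTo_slice_strip hx.2.le ht)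
  refine ⟨(hK.intervalIntegrable_deriv_fst hT hx.1.le (by fun_prop) hKmaps fun ξ hξ =>
      eventually_of_mem (Ioo_mem_nhds hξ.2 hx.2) fun y hy =>
        ⟨hξ.1.le, hy.1.le, hy.2.le⟩).mul_continuousOn huc,
    (hK.intervalIntegrable_deriv_snd hT hx.1.le (by fun_prop) hKmaps
      fun _ => hKmaps.eventually_mem_of_mem_Ioo).mul_continuousOn huc⟩

theorem volterra_transport_identity (hx : x ∈ Ioo 0 L) (ht : 0 < t) {lam mu : ℝ}
    {g k : ℝ → ℝ}
    (hu_pde : ∀ ξ ∈ Ioo 0 x, deriv (fun s => u ξ s) t - mu * deriv (fun y => u y t) ξ = g ξ)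
    (hK_pde : ∀ ξ ∈ Ioo 0 x,
      lam * deriv (fun y => K y ξ) x + mu * deriv (fun s => K x s) ξ = k ξ) :
    deriv (fun s => volterra K u x s) t - lam * deriv (fun y => volterra K u y t) x
      = (mu - lam) * K x x * u x t - mu * K x 0 * u 0 t
        + (∫ ξ in (0 : ℝ)..x, K x ξ * g ξ) - ∫ ξ in (0 : ℝ)..x, k ξ * u ξ t := by
  obtain ⟨i_ut, i_ux⟩ := intervalIntegrable_mul_deriv_strip hK hu ⟨hx.1, hx.2.le⟩ ht
  obtain ⟨i_Kx, i_Kξ⟩ := intervalIntegrable_deriv_triangle_mul hK hu hx ht.le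
  have hsplit_u : ∫ ξ in (0 : ℝ)..x,
      K x ξ * (deriv (fun s => u ξ s) t - mu * deriv (fun y => u y t) ξ)
      = (∫ ξ in (0 : ℝ)..x, K x ξ * deriv (fun s => u ξ s) t)
        - mu * ∫ ξ in (0 : ℝ)..x, K x ξ * deriv (fun y => u y t) ξ := by
    rw [← intervalIntegral.integral_const_mul,
      ← intervalIntegral.integral_sub i_ut (i_ux.const_mul mu)]
    congr 1 with ξ
    ring
  have hsplit_K : ∫ ξ in (0 : ℝ)..x,
      (lam * deriv (fun y => K y ξ) x + mu * deriv (fun s => K x s) ξ) * u ξ t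
      = lam * (∫ ξ in (0 : ℝ)..x, deriv (fun y => K y ξ) x * u ξ t)
        + mu * ∫ ξ in (0 : ℝ)..x, deriv (fun s => K x s) ξ * u ξ t := by
    rw [← intervalIntegral.integral_const_mul, ← intervalIntegral.integral_const_mul,
      ← intervalIntegral.integral_add (i_Kx.const_mul lam) (i_Kξ.const_mul mu)]
    congr 1 with ξ
    ring
  rw [(hasDerivAt_volterra_time hK hu ⟨hx.1, hx.2.le⟩ ht).deriv,
    (hasDerivAt_volterra_space hK hu hx ht.le).deriv,
    intervalIntegral.integral_congr_Ioo_of_le hx.1.le fun ξ hξ =>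
      congrArg (K x ξ * ·) (hu_pde ξ hξ).symm,
    intervalIntegral.integral_congr_Ioo_of_le hx.1.le fun ξ hξ =>
      congrArg (· * u ξ t) (hK_pde ξ hξ).symm,
    hsplit_u, hsplit_K, integral_mul_deriv_space_eq hK hu ⟨hx.1, hx.2.le⟩ ht.le]
  ring

end Volterra

theorem deriv_transport_sub_volterra_sub_volterra {v K₁ u₁ K₂ u₂ : ℝ → ℝ → ℝ} {L x t : ℝ}
    (hv : ContDiffOn ℝ 1 (fun p : ℝ × ℝ => v p.1 p.2) (Icc 0 L ×ˢ Ici 0))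
    (hK₁ : ContDiffOn ℝ 1 (fun p : ℝ × ℝ => K₁ p.1 p.2) (triangle L))
    (hu₁ : ContDiffOn ℝ 1 (fun p : ℝ × ℝ => u₁ p.1 p.2) (Icc 0 L ×ˢ Ici 0))
    (hK₂ : ContDiffOn ℝ 1 (fun p : ℝ × ℝ => K₂ p.1 p.2) (triangle L))
    (hu₂ : ContDiffOn ℝ 1 (fun p : ℝ × ℝ => u₂ p.1 p.2) (Icc 0 L ×ˢ Ici 0))
    (hx : x ∈ Ioo 0 L) (ht : 0 < t) (lam : ℝ) :
    deriv (fun s => v x s - volterra K₁ u₁ x s - volterra K₂ u₂ x s) t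
        - lam * deriv (fun y => v y t - volterra K₁ u₁ y t - volterra K₂ u₂ y t) x
      = (deriv (fun s => v x s) t - lam * deriv (fun y => v y t) x)
        - (deriv (fun s => volterra K₁ u₁ x s) t - lam * deriv (fun y => volterra K₁ u₁ y t) x)
        - (deriv (fun s => volterra K₂ u₂ x s) t
          - lam * deriv (fun y => volterra K₂ u₂ y t) x) := by
  have hvt := (hv.hasDerivAt_snd (eventually_of_mem (Ioi_mem_nhds ht)
    fun s hs => ⟨Ioo_subset_Icc_self hx, Ioi_subset_Ici_self hs⟩)).differentiableAt
  have hvx := (hv.hasDerivAt_fst (eventually_of_mem (Ioo_mem_nhds hx.1 hx.2)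
    fun y hy => ⟨Ioo_subset_Icc_self hy, mem_Ici.2 ht.le⟩)).differentiableAt
  have h₁t := (hasDerivAt_volterra_time hK₁ hu₁ ⟨hx.1, hx.2.le⟩ ht).differentiableAt
  have h₂t := (hasDerivAt_volterra_time hK₂ hu₂ ⟨hx.1, hx.2.le⟩ ht).differentiableAt
  have h₁x := (hasDerivAt_volterra_space hK₁ hu₁ hx ht.le).differentiableAt
  have h₂x := (hasDerivAt_volterra_space hK₂ hu₂ hx ht.le).differentiableAt
  rw [deriv_fun_sub (hvt.fun_sub h₁t) h₂t, deriv_fun_sub hvt h₁t,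
    deriv_fun_sub (hvx.fun_sub h₁x) h₂x, deriv_fun_sub hvx h₁x]
  ring

theorem stmt_3_general (L lam1 lam2 τ vs : ℝ)
    (h1 : 0 < lam1) (h2 : 0 < lam2)
    -- the kernels, C¹ on the triangle 𝒯, solving the kernel equations
    (Kw Kv : ℝ → ℝ → ℝ)
    (hKwC1 : ContDiffOn ℝ 1 (fun p : ℝ × ℝ => Kw p.1 p.2)
      {p : ℝ × ℝ | 0 ≤ p.2 ∧ p.2 ≤ p.1 ∧ p.1 ≤ L})
    (hKvC1 : ContDiffOn ℝ 1 (fun p : ℝ × ℝ => Kv p.1 p.2)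
      {p : ℝ × ℝ | 0 ≤ p.2 ∧ p.2 ≤ p.1 ∧ p.1 ≤ L})
    (hker1 : ∀ x ξ : ℝ, 0 ≤ ξ → ξ ≤ x → x ≤ L →
      lam2 * deriv (fun y => Kw y ξ) x - lam1 * deriv (fun s => Kw x s) ξ
        = (-(1 / τ) * Real.exp (-ξ / (τ * vs))) * Kv x ξ)
    (hker2 : ∀ x ξ : ℝ, 0 ≤ ξ → ξ ≤ x → x ≤ L →
      deriv (fun y => Kv y ξ) x + deriv (fun s => Kv x s) ξ = 0)
    (hker3 : ∀ x ∈ Icc (0:ℝ) L,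
      Kw x x = -(-(1 / τ) * Real.exp (-x / (τ * vs))) / (lam1 + lam2))
    (hker4 : ∀ x ∈ Icc (0:ℝ) L, Kv x 0 = -Kw x 0)
    -- a C¹ solution (w̃, ṽ) of the plant with the backstepping control
    (w v : ℝ → ℝ → ℝ) (U : ℝ → ℝ)
    (hwC1 : ContDiffOn ℝ 1 (fun p : ℝ × ℝ => w p.1 p.2) (Icc 0 L ×ˢ Ici 0))
    (hvC1 : ContDiffOn ℝ 1 (fun p : ℝ × ℝ => v p.1 p.2) (Icc 0 L ×ˢ Ici 0))
    (hwpde : ∀ x ∈ Ioo (0:ℝ) L, ∀ t ∈ Ioi (0:ℝ),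
      deriv (fun s => w x s) t + lam1 * deriv (fun y => w y t) x = 0)
    (hvpde : ∀ x ∈ Ioo (0:ℝ) L, ∀ t ∈ Ioi (0:ℝ),
      deriv (fun s => v x s) t - lam2 * deriv (fun y => v y t) x
        = (-(1 / τ) * Real.exp (-x / (τ * vs))) * w x t)
    (hbc0 : ∀ t : ℝ, 0 ≤ t → w 0 t = -(lam2 / lam1) * v 0 t)
    (hbcL : ∀ t : ℝ, 0 ≤ t →
      v L t = Real.exp (-L / (τ * vs)) * w L t + U t)
    (hU : ∀ t : ℝ, 0 ≤ t →
      U t = -Real.exp (-L / (τ * vs)) * w L t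
        + (∫ ξ in (0:ℝ)..L, Kw L ξ * w ξ t)
        + ∫ ξ in (0:ℝ)..L, Kv L ξ * v ξ t)
    -- the backstepping transformation
    (α β : ℝ → ℝ → ℝ)
    (hαdef : ∀ x t : ℝ, α x t = w x t)
    (hβdef : ∀ x t : ℝ, β x t = v x t
      - (∫ ξ in (0:ℝ)..x, Kw x ξ * w ξ t)
      - ∫ ξ in (0:ℝ)..x, Kv x ξ * v ξ t) :
    (∀ x ∈ Ioo (0:ℝ) L, ∀ t ∈ Ioi (0:ℝ),
      deriv (fun s => α x s) t + lam1 * deriv (fun y => α y t) x = 0) ∧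
    (∀ x ∈ Ioo (0:ℝ) L, ∀ t ∈ Ioi (0:ℝ),
      deriv (fun s => β x s) t - lam2 * deriv (fun y => β y t) x = 0) ∧
    (∀ t : ℝ, 0 ≤ t → α 0 t = -(lam2 / lam1) * β 0 t) ∧
    (∀ t : ℝ, 0 ≤ t → β L t = 0) := by
  refine ⟨fun x hx t ht => by simpa only [hαdef] using hwpde x hx t ht, fun x hx t ht => ?_,
    fun t ht => by simpa [hαdef, hβdef] using hbc0 t ht,
    fun t ht => by rw [hβdef, hbcL t ht, hU t ht]; ring⟩
  have hβ : ∀ x t, β x t = v x t - volterra Kw w x t - volterra Kv v x t := hβdef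
  have hxI : x ∈ Icc 0 L := Ioo_subset_Icc_self hx
  have hIoo : ∀ ξ ∈ Ioo 0 x, ξ ∈ Ioo 0 L := fun ξ hξ => ⟨hξ.1, hξ.2.trans hx.2⟩
  have hw := volterra_transport_identity hKwC1 hwC1 hx ht (lam := lam2) (mu := -lam1)
    (g := fun _ => 0) (k := fun ξ => -(1 / τ) * Real.exp (-ξ / (τ * vs)) * Kv x ξ)
    (fun ξ hξ => by linear_combination hwpde ξ (hIoo ξ hξ) t ht)
    (fun ξ hξ => by linear_combination hker1 x ξ hξ.1.le hξ.2.le hx.2.le)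
  have hv := volterra_transport_identity hKvC1 hvC1 hx ht (lam := lam2) (mu := lam2)
    (g := fun ξ => -(1 / τ) * Real.exp (-ξ / (τ * vs)) * w ξ t) (k := fun _ => 0)
    (fun ξ hξ => hvpde ξ (hIoo ξ hξ) t ht)
    (fun ξ hξ => by linear_combination lam2 * hker2 x ξ hξ.1.le hξ.2.le hx.2.le)
  simp only [mul_zero, zero_mul, intervalIntegral.integral_zero, sub_zero, add_zero] at hw hv
  have hcross : ∫ ξ in (0 : ℝ)..x, -(1 / τ) * Real.exp (-ξ / (τ * vs)) * Kv x ξ * w ξ t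
      = ∫ ξ in (0 : ℝ)..x, Kv x ξ * (-(1 / τ) * Real.exp (-ξ / (τ * vs)) * w ξ t) :=
    intervalIntegral.integral_congr fun ξ _ => by ring
  have h3 : (lam1 + lam2) * Kw x x = -(-(1 / τ) * Real.exp (-x / (τ * vs))) := by
    rw [hker3 x hxI, mul_div_cancel₀ _ (add_pos h1 h2).ne']
  have h0 : lam1 * w 0 t = -lam2 * v 0 t := by
    rw [hbc0 t (le_of_lt ht)]; field_simp
  simp only [hβ]
  rw [deriv_transport_sub_volterra_sub_volterra hvC1 hKwC1 hwC1 hKvC1 hvC1 hx ht]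
  linear_combination hvpde x hx t ht - hw - hv + hcross + w x t * h3 - Kw x 0 * h0
    + lam2 * v 0 t * hker4 x hxI

/-- the backstepping transformation
`α(x,t) = w̃(x,t)`,
`β(x,t) = ṽ(x,t) − ∫₀^x K^w(x,ξ) w̃(ξ,t) dξ − ∫₀^x K^v(x,ξ) ṽ(ξ,t) dξ`
maps the closed-loop plant (with exact kernels and the backstepping control) into
the target system `∂_t α + λ₁ ∂_x α = 0`, `∂_t β − λ₂ ∂_x β = 0`,
`α(0,t) = −r β(0,t)`, `β(L,t) = 0`. -/
theorem stmt_3 (L lam1 lam2 τ vs : ℝ)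
    (hL : 0 < L) (h1 : 0 < lam1) (h2 : 0 < lam2) (hτ : 0 < τ) (hvs : 0 < vs)
    -- the kernels, C¹ on the triangle 𝒯, solving the kernel equations
    (Kw Kv : ℝ → ℝ → ℝ)
    (hKwC1 : ContDiffOn ℝ 1 (fun p : ℝ × ℝ => Kw p.1 p.2)
      {p : ℝ × ℝ | 0 ≤ p.2 ∧ p.2 ≤ p.1 ∧ p.1 ≤ L})
    (hKvC1 : ContDiffOn ℝ 1 (fun p : ℝ × ℝ => Kv p.1 p.2)
      {p : ℝ × ℝ | 0 ≤ p.2 ∧ p.2 ≤ p.1 ∧ p.1 ≤ L})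
    (hker1 : ∀ x ξ : ℝ, 0 ≤ ξ → ξ ≤ x → x ≤ L →
      lam2 * deriv (fun y => Kw y ξ) x - lam1 * deriv (fun s => Kw x s) ξ
        = (-(1 / τ) * Real.exp (-ξ / (τ * vs))) * Kv x ξ)
    (hker2 : ∀ x ξ : ℝ, 0 ≤ ξ → ξ ≤ x → x ≤ L →
      deriv (fun y => Kv y ξ) x + deriv (fun s => Kv x s) ξ = 0)
    (hker3 : ∀ x ∈ Icc (0:ℝ) L,
      Kw x x = -(-(1 / τ) * Real.exp (-x / (τ * vs))) / (lam1 + lam2))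
    (hker4 : ∀ x ∈ Icc (0:ℝ) L, Kv x 0 = -Kw x 0)
    -- a C¹ solution (w̃, ṽ) of the plant with the backstepping control
    (w v : ℝ → ℝ → ℝ) (U : ℝ → ℝ)
    (hwC1 : ContDiffOn ℝ 1 (fun p : ℝ × ℝ => w p.1 p.2) (Icc 0 L ×ˢ Ici 0))
    (hvC1 : ContDiffOn ℝ 1 (fun p : ℝ × ℝ => v p.1 p.2) (Icc 0 L ×ˢ Ici 0))
    (hwpde : ∀ x ∈ Ioo (0:ℝ) L, ∀ t ∈ Ioi (0:ℝ),
      deriv (fun s => w x s) t + lam1 * deriv (fun y => w y t) x = 0)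
    (hvpde : ∀ x ∈ Ioo (0:ℝ) L, ∀ t ∈ Ioi (0:ℝ),
      deriv (fun s => v x s) t - lam2 * deriv (fun y => v y t) x
        = (-(1 / τ) * Real.exp (-x / (τ * vs))) * w x t)
    (hbc0 : ∀ t : ℝ, 0 ≤ t → w 0 t = -(lam2 / lam1) * v 0 t)
    (hbcL : ∀ t : ℝ, 0 ≤ t →
      v L t = Real.exp (-L / (τ * vs)) * w L t + U t)
    (hU : ∀ t : ℝ, 0 ≤ t →
      U t = -Real.exp (-L / (τ * vs)) * w L t
        + (∫ ξ in (0:ℝ)..L, Kw L ξ * w ξ t)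
        + ∫ ξ in (0:ℝ)..L, Kv L ξ * v ξ t)
    -- the backstepping transformation
    (α β : ℝ → ℝ → ℝ)
    (hαdef : ∀ x t : ℝ, α x t = w x t)
    (hβdef : ∀ x t : ℝ, β x t = v x t
      - (∫ ξ in (0:ℝ)..x, Kw x ξ * w ξ t)
      - ∫ ξ in (0:ℝ)..x, Kv x ξ * v ξ t) :
    (∀ x ∈ Ioo (0:ℝ) L, ∀ t ∈ Ioi (0:ℝ),
      deriv (fun s => α x s) t + lam1 * deriv (fun y => α y t) x = 0) ∧
    (∀ x ∈ Ioo (0:ℝ) L, ∀ t ∈ Ioi (0:ℝ),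
      deriv (fun s => β x s) t - lam2 * deriv (fun y => β y t) x = 0) ∧
    (∀ t : ℝ, 0 ≤ t → α 0 t = -(lam2 / lam1) * β 0 t) ∧
    (∀ t : ℝ, 0 ≤ t → β L t = 0) :=
  stmt_3_general L lam1 lam2 τ vs h1 h2 Kw Kv hKwC1 hKvC1 hker1 hker2 hker3 hker4 w v U hwC1 hvC1
    hwpde hvpde hbc0 hbcL hU α β hαdef hβdef
end

section
/- Let ρ̄, v̄ ∈ C¹([0,L]×[0,∞)) satisfy the linearized ARZ system: ∂_t ρ̄ + v* ∂_x ρ̄ + ρ* ∂_x v̄ = 0 and ∂_t v̄ + (v* + ρ* V′) ∂_x v̄ = (V′ ρ̄ − v̄)/τ. Define q̄ = v* ρ̄ + ρ* v̄, w̃(x,t) = exp(x/(τ v*)) · (q̄(x,t) − (ρ* + v*/V′) v̄(x,t)), and ṽ(x,t) = −(v*/V′) v̄(x,t). Then w̃ and ṽ satisfy the diagonalized system ∂_t w̃ + λ₁ ∂_x w̃ = 0 and ∂_t ṽ − λ₂ ∂_x ṽ = c(x) w̃, where λ₁ = v*, λ₂ = −ρ* V′ − v*, and c(x) = −(1/τ)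 exp(−x/(τ v*)). -/
/-!
The combination `r = q̄ − (ρ* + v*/V′) v̄` is a Riemann invariant of the linearized ARZ system:
the two equations combine to the damped transport equation `∂ₜ r + v* ∂ₓ r = −r / τ`, and the
weight `e^{x/(τ v*)}` in `w̃ = e^{x/(τ v*)} r` absorbs the damping. Multiplying the velocity
equation by `−v*/V′` leaves the source `−r / τ = c(x) w̃`.
-/

open Set Real

section Slices

variable {𝕜 E F G : Type*} [NontriviallyNormedField 𝕜] [NormedAddCommGroup E] [NormedSpace 𝕜 E]
  [NormedAddCommGroup F] [NormedSpace 𝕜 F] [NormedAddCommGroup G] [NormedSpace 𝕜 G]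
  {f : E × F → G} {x : E} {y : F}

theorem DifferentiableAt.comp_prodMk_left (h : DifferentiableAt 𝕜 f (x, y)) :
    DifferentiableAt 𝕜 (fun x' => f (x', y)) x :=
  h.comp x (hasFDerivAt_prodMk_left x y).differentiableAt

theorem DifferentiableAt.comp_prodMk_right (h : DifferentiableAt 𝕜 f (x, y)) :
    DifferentiableAt 𝕜 (fun y' => f (x, y')) y :=
  h.comp y (hasFDerivAt_prodMk_right x y).differentiableAt

end Slices

theorem differentiableAt_of_contDiffOn_Icc_prod_Ici {f : ℝ × ℝ → ℝ} {L x t : ℝ}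
    (hf : ContDiffOn ℝ 1 f (Icc 0 L ×ˢ Ici 0)) (hx : x ∈ Ioo 0 L) (ht : t ∈ Ioi 0) :
    DifferentiableAt ℝ f (x, t) :=
  (hf.contDiffAt (prod_mem_nhds (Icc_mem_nhds hx.1 hx.2) (Ici_mem_nhds ht))).differentiableAt
    one_ne_zero

theorem transport_exp_mul_of_damped_transport {a τ x t : ℝ} {z : ℝ → ℝ → ℝ} (ha : a ≠ 0)
    (hzx : DifferentiableAt ℝ (fun y => z y t) x)
    (hz : deriv (fun s => z x s) t + a * deriv (fun y => z y t) x = -z x t / τ) :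
    deriv (fun s => exp (x / (τ * a)) * z x s) t
      + a * deriv (fun y => exp (y / (τ * a)) * z y t) x = 0 := by
  have hexp : HasDerivAt (fun y => exp (y / (τ * a))) (exp (x / (τ * a)) * (1 / (τ * a))) x :=
    ((hasDerivAt_id x).div_const (τ * a)).exp
  have hprod : HasDerivAt (fun y => exp (y / (τ * a)) * z y t)
      (exp (x / (τ * a)) * (1 / (τ * a)) * z x t + exp (x / (τ * a)) * deriv (fun y => z y t) x) x :=
    hexp.mul hzx.hasDerivAt
  rw [deriv_const_mul_field, hprod.deriv]
  have hweight : a * (1 / (τ * a)) = 1 / τ := by rw [mul_one_div, div_mul_cancel_right₀ ha, one_div]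
  linear_combination exp (x / (τ * a)) * hz + exp (x / (τ * a)) * z x t * hweight

noncomputable def arzRiemannInvariant (ρs vs Vp : ℝ) (ρb vb : ℝ → ℝ → ℝ) (x t : ℝ) : ℝ :=
  (vs * ρb x t + ρs * vb x t) - (ρs + vs / Vp) * vb x t

section LinearizedARZ

variable {τ ρs vs Vp : ℝ} {ρb vb : ℝ → ℝ → ℝ} {x t : ℝ}

theorem hasDerivAt_arzRiemannInvariant {f g : ℝ → ℝ} {f' g' y : ℝ}
    (hf : HasDerivAt f f' y) (hg : HasDerivAt g g' y) :
    HasDerivAt (fun y => (vs * f y + ρs * g y) - (ρs + vs / Vp) * g y)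
      ((vs * f' + ρs * g') - (ρs + vs / Vp) * g') y :=
  ((hf.const_mul vs).add (hg.const_mul ρs)).sub (hg.const_mul (ρs + vs / Vp))

theorem arzRiemannInvariant_damped_transport (hVp : Vp ≠ 0)
    (hρt : DifferentiableAt ℝ (fun s => ρb x s) t) (hρx : DifferentiableAt ℝ (fun y => ρb y t) x)
    (hvt : DifferentiableAt ℝ (fun s => vb x s) t) (hvx : DifferentiableAt ℝ (fun y => vb y t) x)
    (hmass : deriv (fun s => ρb x s) t + vs * deriv (fun y => ρb y t) x
      + ρs * deriv (fun y => vb y t) x = 0)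
    (hmom : deriv (fun s => vb x s) t + (vs + ρs * Vp) * deriv (fun y => vb y t) x
      = (Vp * ρb x t - vb x t) / τ) :
    deriv (fun s => arzRiemannInvariant ρs vs Vp ρb vb x s) t
      + vs * deriv (fun y => arzRiemannInvariant ρs vs Vp ρb vb y t) x
      = -arzRiemannInvariant ρs vs Vp ρb vb x t / τ := by
  unfold arzRiemannInvariant
  rw [(hasDerivAt_arzRiemannInvariant hρt.hasDerivAt hvt.hasDerivAt).deriv,
    (hasDerivAt_arzRiemannInvariant hρx.hasDerivAt hvx.hasDerivAt).deriv]
  field_simp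
  linear_combination Vp * vs * hmass - vs * hmom

theorem arz_scaled_velocity_transport (hVp : Vp ≠ 0)
    (hmom : deriv (fun s => vb x s) t + (vs + ρs * Vp) * deriv (fun y => vb y t) x
      = (Vp * ρb x t - vb x t) / τ) :
    deriv (fun s => -(vs / Vp) * vb x s) t
      - (-ρs * Vp - vs) * deriv (fun y => -(vs / Vp) * vb y t) x
      = -arzRiemannInvariant ρs vs Vp ρb vb x t / τ := by
  rw [deriv_const_mul_field, deriv_const_mul_field]
  unfold arzRiemannInvariant
  field_simp
  linear_combination -vs * hmom

end LinearizedARZ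

theorem stmt_5_general (L τ ρs vs Vp : ℝ)
    (hvs : 0 < vs) (hVp : Vp < 0)
    (ρb vb w v : ℝ → ℝ → ℝ)
    (hρC1 : ContDiffOn ℝ 1 (fun p : ℝ × ℝ => ρb p.1 p.2) (Icc 0 L ×ˢ Ici 0))
    (hvC1 : ContDiffOn ℝ 1 (fun p : ℝ × ℝ => vb p.1 p.2) (Icc 0 L ×ˢ Ici 0))
    (hpde1 : ∀ x ∈ Ioo (0:ℝ) L, ∀ t ∈ Ioi (0:ℝ),
      deriv (fun s => ρb x s) t + vs * deriv (fun y => ρb y t) x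
        + ρs * deriv (fun y => vb y t) x = 0)
    (hpde2 : ∀ x ∈ Ioo (0:ℝ) L, ∀ t ∈ Ioi (0:ℝ),
      deriv (fun s => vb x s) t + (vs + ρs * Vp) * deriv (fun y => vb y t) x
        = (Vp * ρb x t - vb x t) / τ)
    (hwdef : ∀ x t : ℝ, w x t = Real.exp (x / (τ * vs))
      * ((vs * ρb x t + ρs * vb x t) - (ρs + vs / Vp) * vb x t))
    (hvdef : ∀ x t : ℝ, v x t = -(vs / Vp) * vb x t) :
    (∀ x ∈ Ioo (0:ℝ) L, ∀ t ∈ Ioi (0:ℝ),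
      deriv (fun s => w x s) t + vs * deriv (fun y => w y t) x = 0) ∧
    (∀ x ∈ Ioo (0:ℝ) L, ∀ t ∈ Ioi (0:ℝ),
      deriv (fun s => v x s) t - (-ρs * Vp - vs) * deriv (fun y => v y t) x
        = (-(1 / τ) * Real.exp (-x / (τ * vs))) * w x t) := by
  obtain rfl : w = fun x t => exp (x / (τ * vs)) * arzRiemannInvariant ρs vs Vp ρb vb x t :=
    funext₂ hwdef
  obtain rfl : v = fun x t => -(vs / Vp) * vb x t := funext₂ hvdef
  refine ⟨fun x hx t ht => ?_, fun x hx t ht => ?_⟩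
  · have hρ := differentiableAt_of_contDiffOn_Icc_prod_Ici hρC1 hx ht
    have hv := differentiableAt_of_contDiffOn_Icc_prod_Ici hvC1 hx ht
    exact transport_exp_mul_of_damped_transport hvs.ne'
      (hasDerivAt_arzRiemannInvariant hρ.comp_prodMk_left.hasDerivAt
        hv.comp_prodMk_left.hasDerivAt).differentiableAt
      (arzRiemannInvariant_damped_transport hVp.ne hρ.comp_prodMk_right hρ.comp_prodMk_left
        hv.comp_prodMk_right hv.comp_prodMk_left (hpde1 x hx t ht) (hpde2 x hx t ht))
  · rw [arz_scaled_velocity_transport hVp.ne (hpde2 x hx t ht)]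
    dsimp only
    rw [neg_div (τ * vs) x, exp_neg]
    field_simp

/-- the Riemann-type transformation
`w̃(x,t) = e^{x/(τ v*)} (q̄ − (ρ* + v*/V′) v̄)(x,t)`, `ṽ(x,t) = −(v*/V′) v̄(x,t)`
(with `q̄ = v* ρ̄ + ρ* v̄`) diagonalizes the linearized ARZ system:
`∂_t w̃ + λ₁ ∂_x w̃ = 0` and `∂_t ṽ − λ₂ ∂_x ṽ = c(x) w̃`, where `λ₁ = v*`,
`λ₂ = −ρ* V′ − v*`, `c(x) = −(1/τ) e^{−x/(τ v*)}`. -/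
theorem stmt_5 (L τ ρs vs Vp : ℝ)
    (hL : 0 < L) (hτ : 0 < τ) (hρs : 0 < ρs) (hvs : 0 < vs) (hVp : Vp < 0)
    (hcong : 0 < -ρs * Vp - vs)
    (ρb vb w v : ℝ → ℝ → ℝ)
    (hρC1 : ContDiffOn ℝ 1 (fun p : ℝ × ℝ => ρb p.1 p.2) (Icc 0 L ×ˢ Ici 0))
    (hvC1 : ContDiffOn ℝ 1 (fun p : ℝ × ℝ => vb p.1 p.2) (Icc 0 L ×ˢ Ici 0))
    (hpde1 : ∀ x ∈ Ioo (0:ℝ) L, ∀ t ∈ Ioi (0:ℝ),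
      deriv (fun s => ρb x s) t + vs * deriv (fun y => ρb y t) x
        + ρs * deriv (fun y => vb y t) x = 0)
    (hpde2 : ∀ x ∈ Ioo (0:ℝ) L, ∀ t ∈ Ioi (0:ℝ),
      deriv (fun s => vb x s) t + (vs + ρs * Vp) * deriv (fun y => vb y t) x
        = (Vp * ρb x t - vb x t) / τ)
    (hwdef : ∀ x t : ℝ, w x t = Real.exp (x / (τ * vs))
      * ((vs * ρb x t + ρs * vb x t) - (ρs + vs / Vp) * vb x t))
    (hvdef : ∀ x t : ℝ, v x t = -(vs / Vp) * vb x t) :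
    (∀ x ∈ Ioo (0:ℝ) L, ∀ t ∈ Ioi (0:ℝ),
      deriv (fun s => w x s) t + vs * deriv (fun y => w y t) x = 0) ∧
    (∀ x ∈ Ioo (0:ℝ) L, ∀ t ∈ Ioi (0:ℝ),
      deriv (fun s => v x s) t - (-ρs * Vp - vs) * deriv (fun y => v y t) x
        = (-(1 / τ) * Real.exp (-x / (τ * vs))) * w x t) :=
  stmt_5_general L τ ρs vs Vp hvs hVp ρb vb w v hρC1 hvC1 hpde1 hpde2 hwdef hvdef
end

section
/- Let α, β ∈ C¹([0,L]×[0,∞)) satisfy ∂_t α + λ₁ ∂_x α = 0 and ∂_t β − λ₂ ∂_x β = 0 on (0,L)×(0,∞), with boundary conditions β(L,t) = 0 and α(0,t) = −r β(0,t) for all t ≥ 0. Then the solution vanishes identically after the finite time t_f = L/λ₁ + L/λ₂: α(x,t) = 0 and β(x,t) = 0 for all x ∈ [0,L] and all t ≥ t_f. More precisely, β(x,t) = 0 whenever t ≥ (L−x)/λ₂, and α(x,t) = 0 whenever t ≥ L/λ₂ + x/λ₁. -/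
/-!
A solution of `∂ₜf + c ∂ₓf = 0` has zero derivative along each characteristic
`s ↦ (x - c s, t - s)`, so by the mean value theorem it is constant there. Following the
characteristic of `β` back to the outlet `x = L`, where `β` vanishes, gives `β(x,t) = 0` for
`t ≥ (L - x)/λ₂`. Following that of `α` back to the inlet `x = 0` gives
`α(x,t) = -r β(0, t - x/λ₁)`, which vanishes once `t - x/λ₁ ≥ L/λ₂`.
-/

open Set Function

lemma eq_of_hasDerivAt_zero_Ioo {g : ℝ → ℝ} {a b : ℝ} (hab : a ≤ b)
    (hc : ContinuousOn g (Icc a b)) (hd : ∀ s ∈ Ioo a b, HasDerivAt g 0 s) : g b = g a := by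
  rcases hab.eq_or_lt with rfl | hlt
  · rfl
  obtain ⟨_, _, hslope⟩ := exists_hasDerivAt_eq_slope g (fun _ => 0) hlt hc hd
  have := (div_eq_zero_iff.mp hslope.symm).resolve_right (sub_ne_zero.mpr hlt.ne')
  linarith

lemma hasDerivAt_characteristic {f : ℝ → ℝ → ℝ} {c x t s : ℝ}
    (hf : DifferentiableAt ℝ (uncurry f) (x - c * s, t - s)) :
    HasDerivAt (fun σ => f (x - c * σ) (t - σ))
      (-(deriv (fun τ => f (x - c * s) τ) (t - s) + c * deriv (fun y => f y (t - s)) (x - c * s)))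
      s := by
  set D := fderiv ℝ (uncurry f) (x - c * s, t - s)
  have hF : HasFDerivAt (uncurry f) D (x - c * s, t - s) := hf.hasFDerivAt
  have hx : HasDerivAt (fun y => f y (t - s)) (D (1, 0)) (x - c * s) :=
    hF.comp_hasDerivAt_of_eq (x - c * s) ((hasDerivAt_id _).prodMk (hasDerivAt_const _ _)) rfl
  have ht : HasDerivAt (fun τ => f (x - c * s) τ) (D (0, 1)) (t - s) :=
    hF.comp_hasDerivAt_of_eq (t - s) ((hasDerivAt_const _ _).prodMk (hasDerivAt_id _)) rfl
  have hline : HasDerivAt (fun σ : ℝ => (x - c * σ, t - σ)) (-c, -1) s := by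
    refine HasDerivAt.prodMk ?_ ?_
    · simpa using ((hasDerivAt_id s).const_mul c).const_sub x
    · simpa using (hasDerivAt_id s).const_sub t
  have hdir : D (-c, -1) = -(D (0, 1) + c * D (1, 0)) := by
    have : ((-c, -1) : ℝ × ℝ) = -((0, 1) + c • (1, 0)) := by simp
    rw [this, map_neg, map_add, map_smul, smul_eq_mul]
  rw [ht.deriv, hx.deriv, ← hdir]
  exact hF.comp_hasDerivAt s hline

lemma transport_eq_along_characteristic {f : ℝ → ℝ → ℝ} {S : Set (ℝ × ℝ)} {c x t T : ℝ}
    (hcont : ContinuousOn (uncurry f) S) (hdiff : DifferentiableOn ℝ (uncurry f) (interior S))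
    (hpde : ∀ p ∈ interior S,
      deriv (fun τ => f p.1 τ) p.2 + c * deriv (fun y => f y p.2) p.1 = 0)
    (hT : 0 ≤ T) (hmem : ∀ s ∈ Icc 0 T, (x - c * s, t - s) ∈ S)
    (hmem_int : ∀ s ∈ Ioo 0 T, (x - c * s, t - s) ∈ interior S) :
    f (x - c * T) (t - T) = f x t := by
  have hline : Continuous fun σ : ℝ => (x - c * σ, t - σ) := by fun_prop
  have := eq_of_hasDerivAt_zero_Ioo (g := fun σ => f (x - c * σ) (t - σ)) hT
    (hcont.comp hline.continuousOn hmem) fun s hs => by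
      have hd := hasDerivAt_characteristic
        ((hdiff _ (hmem_int s hs)).differentiableAt (isOpen_interior.mem_nhds (hmem_int s hs)))
      rwa [hpde _ (hmem_int s hs), neg_zero] at hd
  simpa using this

lemma interior_Icc_prod_Ici (a b c : ℝ) :
    interior (Icc a b ×ˢ Ici c) = Ioo a b ×ˢ Ioi c := by
  rw [interior_prod_eq, interior_Icc, interior_Ici]

section Rectangle

variable {L c : ℝ} {f : ℝ → ℝ → ℝ}

lemma transport_eq_left_inflow (hc : 0 < c)
    (hf : ContDiffOn ℝ 1 (uncurry f) (Icc 0 L ×ˢ Ici 0))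
    (hpde : ∀ x ∈ Ioo (0:ℝ) L, ∀ t ∈ Ioi (0:ℝ),
      deriv (fun τ => f x τ) t + c * deriv (fun y => f y t) x = 0)
    {x t : ℝ} (hx : x ∈ Icc 0 L) (ht : x / c ≤ t) :
    f x t = f 0 (t - x / c) := by
  set T := x / c
  have hT : c * T = x := mul_div_cancel₀ _ hc.ne'
  have hT0 : 0 ≤ T := div_nonneg hx.1 hc.le
  have key := transport_eq_along_characteristic (c := c) (x := x) (t := t)
    hf.continuousOn ((hf.differentiableOn one_ne_zero).mono interior_subset)
    (fun p hp => by
      rw [interior_Icc_prod_Ici] at hp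
      exact hpde p.1 hp.1 p.2 hp.2) hT0
    (fun s ⟨hs0, hsT⟩ =>
      ⟨⟨by nlinarith, by nlinarith [hx.2]⟩, by simp only [mem_Ici]; linarith⟩)
    (fun s ⟨hs0, hsT⟩ => by
      rw [interior_Icc_prod_Ici]
      exact ⟨⟨by nlinarith, by nlinarith [hx.2]⟩, by simp only [mem_Ioi]; linarith⟩)
  rw [← key, show x - c * T = 0 by linarith]

lemma transport_eq_right_inflow (hc : 0 < c)
    (hf : ContDiffOn ℝ 1 (uncurry f) (Icc 0 L ×ˢ Ici 0))
    (hpde : ∀ x ∈ Ioo (0:ℝ) L, ∀ t ∈ Ioi (0:ℝ),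
      deriv (fun τ => f x τ) t - c * deriv (fun y => f y t) x = 0)
    {x t : ℝ} (hx : x ∈ Icc 0 L) (ht : (L - x) / c ≤ t) :
    f x t = f L (t - (L - x) / c) := by
  set T := (L - x) / c
  have hT : c * T = L - x := mul_div_cancel₀ _ hc.ne'
  have hT0 : 0 ≤ T := div_nonneg (by linarith [hx.2]) hc.le
  have key := transport_eq_along_characteristic (c := -c) (x := x) (t := t)
    hf.continuousOn ((hf.differentiableOn one_ne_zero).mono interior_subset)
    (fun p hp => by
      rw [interior_Icc_prod_Ici] at hp
      linarith [hpde p.1 hp.1 p.2 hp.2]) hT0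
    (fun s ⟨hs0, hsT⟩ =>
      ⟨⟨by nlinarith [hx.1], by nlinarith⟩, by simp only [mem_Ici]; linarith⟩)
    (fun s ⟨hs0, hsT⟩ => by
      rw [interior_Icc_prod_Ici]
      exact ⟨⟨by nlinarith [hx.1], by nlinarith⟩, by simp only [mem_Ioi]; linarith⟩)
  rw [← key, show x - -c * T = L by linarith]

end Rectangle

/-- finite-time convergence of the target system.  Solutions of the
two transport equations with boundary conditions `β(L,t) = 0`, `α(0,t) = −r β(0,t)`
vanish identically after `t_f = L/λ₁ + L/λ₂`; more precisely `β(x,t) = 0` for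
`t ≥ (L−x)/λ₂` and `α(x,t) = 0` for `t ≥ L/λ₂ + x/λ₁`. -/
theorem stmt_7 (L lam1 lam2 r : ℝ)
    (hL : 0 < L) (h1 : 0 < lam1) (h2 : 0 < lam2)
    (α β : ℝ → ℝ → ℝ)
    (hα : ContDiffOn ℝ 1 (fun p : ℝ × ℝ => α p.1 p.2) (Icc 0 L ×ˢ Ici 0))
    (hβ : ContDiffOn ℝ 1 (fun p : ℝ × ℝ => β p.1 p.2) (Icc 0 L ×ˢ Ici 0))
    (hαpde : ∀ x ∈ Ioo (0:ℝ) L, ∀ t ∈ Ioi (0:ℝ),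
      deriv (fun s => α x s) t + lam1 * deriv (fun y => α y t) x = 0)
    (hβpde : ∀ x ∈ Ioo (0:ℝ) L, ∀ t ∈ Ioi (0:ℝ),
      deriv (fun s => β x s) t - lam2 * deriv (fun y => β y t) x = 0)
    (hbc0 : ∀ t : ℝ, 0 ≤ t → α 0 t = -r * β 0 t)
    (hbcL : ∀ t : ℝ, 0 ≤ t → β L t = 0) :
    (∀ x ∈ Icc (0:ℝ) L, ∀ t : ℝ, (L - x) / lam2 ≤ t → β x t = 0) ∧
    (∀ x ∈ Icc (0:ℝ) L, ∀ t : ℝ, L / lam2 + x / lam1 ≤ t → α x t = 0) ∧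
    (∀ x ∈ Icc (0:ℝ) L, ∀ t : ℝ, L / lam1 + L / lam2 ≤ t → α x t = 0 ∧ β x t = 0) := by
  have hβ_zero : ∀ x ∈ Icc (0:ℝ) L, ∀ t : ℝ, (L - x) / lam2 ≤ t → β x t = 0 := by
    intro x hx t ht
    rw [transport_eq_right_inflow h2 hβ hβpde hx ht]
    exact hbcL _ (sub_nonneg.mpr ht)
  have hα_zero : ∀ x ∈ Icc (0:ℝ) L, ∀ t : ℝ, L / lam2 + x / lam1 ≤ t → α x t = 0 := by
    intro x hx t ht
    have hx_t : x / lam1 ≤ t := by linarith [div_nonneg hL.le h2.le]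
    rw [transport_eq_left_inflow h1 hα hαpde hx hx_t, hbc0 _ (sub_nonneg.mpr hx_t),
      hβ_zero 0 ⟨le_rfl, hL.le⟩ _ (by rw [sub_zero]; linarith), mul_zero]
  refine ⟨hβ_zero, hα_zero, fun x hx t ht => ⟨hα_zero x hx t ?_, hβ_zero x hx t ?_⟩⟩
  · linarith [div_le_div_of_nonneg_right hx.2 h1.le]
  · linarith [div_le_div_of_nonneg_right (sub_le_self L hx.1) h2.le, div_nonneg hL.le h1.le]
end

section
/- Let α, β ∈ C¹([0,L]×[0,∞)) satisfy ∂_t α + λ₁ ∂_x α = 0 and ∂_t β − λ₂ ∂_x β = 0 on (0,L)×(0,∞), with α(0,t) = −r β(0,t) for all t ≥ 0. Fix ν > 0 and a > 0, and define the Lyapunov functional V(t) = ∫₀^L [(e^{−ν x/λ₁}/λ₁) α(x,t)² + a (e^{ν x/λ₂}/λ₂) β(x,t)²] dx. Then for every t > 0, V is differentiable and satisfies the identity V′(t) = −ν V(t) + (r² − a) β(0,t)² − e^{−ν L/λ₁} α(L,t)² + a e^{ν L/λ₂} β(L,t)². In particular, if a ≥ r², then V′(t) ≤ −ν V(t) +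 a e^{ν L/λ₂} β(L,t)². -/
open Set Real

/-- The Lyapunov functional
`V(t) = ∫₀^L (e^{−ν x/λ₁}/λ₁) α(x,t)² + a (e^{ν x/λ₂}/λ₂) β(x,t)² dx`. -/
noncomputable def lyap (L lam1 lam2 ν a : ℝ) (α β : ℝ → ℝ → ℝ) (t : ℝ) : ℝ :=
  ∫ x in (0:ℝ)..L,
    ((Real.exp (-ν * x / lam1) / lam1) * (α x t) ^ 2
      + a * (Real.exp (ν * x / lam2) / lam2) * (β x t) ^ 2)

/-!
The transport equations turn the time derivative of the weighted energy density
`ρ = (e^{-νx/λ₁}/λ₁) α² + a (e^{νx/λ₂}/λ₂) β²` into a space derivative: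
`∂ₜρ = ∂ₓG - νρ` with flux `G = -e^{-νx/λ₁} α² + a e^{νx/λ₂} β²`.
Since `∂ₜρ` is continuous on compact rectangles we may differentiate `V = ∫ ρ` under the integral
sign, and the fundamental theorem of calculus gives `V' = G(L) - G(0) - νV`; the boundary
condition turns `G(0)` into `(a - r²) β(0,t)²`.
-/

open Filter Topology MeasureTheory
open scoped Interval

theorem hasDerivAt_comp_prodMk_right_of_mem_nhds {E : Type*} [NormedAddCommGroup E]
    [NormedSpace ℝ E] {f : ℝ × ℝ → E} {s : Set (ℝ × ℝ)} {x t : ℝ}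
    (hf : DifferentiableWithinAt ℝ f s (x, t)) (hs : s ∈ 𝓝 (x, t)) :
    HasDerivAt (fun τ => f (x, τ)) (fderivWithin ℝ f s (x, t) (0, 1)) t := by
  rw [fderivWithin_of_mem_nhds hs]
  exact (hf.differentiableAt hs).hasFDerivAt.comp_hasDerivAt t
    ((hasDerivAt_const t x).prodMk (hasDerivAt_id t))

theorem ContinuousOn.comp_prodMk_right {E : Type*} [TopologicalSpace E] {f : ℝ × ℝ → E}
    {s T : Set ℝ} {t : ℝ} (hf : ContinuousOn f (s ×ˢ T)) (ht : t ∈ T) :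
    ContinuousOn (fun x => f (x, t)) s :=
  hf.comp (by fun_prop : Continuous fun x : ℝ => (x, t)).continuousOn fun _ hx => ⟨hx, ht⟩

theorem hasDerivAt_intervalIntegral_of_contDiffOn_s10 {E : Type*} [NormedAddCommGroup E]
    [NormedSpace ℝ E] [CompleteSpace E] {f : ℝ × ℝ → E} {a b t₀ : ℝ} {U : Set ℝ}
    (hab : a < b) (hU : IsOpen U) (ht₀ : t₀ ∈ U) (hf : ContDiffOn ℝ 1 f (Icc a b ×ˢ U)) :
    IntervalIntegrable (fun x => fderivWithin ℝ f (Icc a b ×ˢ U) (x, t₀) (0, 1)) volume a b ∧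
      HasDerivAt (fun t => ∫ x in a..b, f (x, t))
        (∫ x in a..b, fderivWithin ℝ f (Icc a b ×ˢ U) (x, t₀) (0, 1)) t₀ := by
  set S := Icc a b ×ˢ U
  have hderiv : ContinuousOn (fun p => fderivWithin ℝ f S p (0, 1)) S :=
    (hf.continuousOn_fderivWithin_apply ((uniqueDiffOn_Icc hab).prod hU.uniqueDiffOn) le_rfl).comp
      (continuous_id.prodMk continuous_const).continuousOn
      fun p hp => ⟨hp, mem_univ ((0 : ℝ), (1 : ℝ))⟩
  have hslice {g : ℝ × ℝ → E} (hg : ContinuousOn g S) {t : ℝ} (ht : t ∈ U) :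
      IntervalIntegrable (fun x => g (x, t)) volume a b :=
    (uIcc_of_le hab.le ▸ hg.comp_prodMk_right ht).intervalIntegrable
  obtain ⟨δ, hδ, hball⟩ := Metric.nhds_basis_closedBall.mem_iff.mp (hU.mem_nhds ht₀)
  have hK : Icc a b ×ˢ Metric.closedBall t₀ δ ⊆ S := prod_mono le_rfl hball
  obtain ⟨C, hC⟩ := (isCompact_Icc.prod (isCompact_closedBall t₀ δ)).exists_bound_of_continuousOn
    (hderiv.mono hK)
  refine intervalIntegral.hasDerivAt_integral_of_dominated_loc_of_deriv_le
    (F' := fun t x => fderivWithin ℝ f S (x, t) (0, 1)) (bound := fun _ => C)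
    (Metric.ball_mem_nhds t₀ hδ) ?_ ?_ ?_ ?_ intervalIntegrable_const ?_
  · filter_upwards [hU.mem_nhds ht₀] with t ht
    exact (intervalIntegrable_iff.mp (hslice hf.continuousOn ht)).aestronglyMeasurable
  · exact hslice hf.continuousOn ht₀
  · exact (intervalIntegrable_iff.mp (hslice hderiv ht₀)).aestronglyMeasurable
  · refine ae_of_all _ fun x hx t ht => hC _ ⟨?_, Metric.ball_subset_closedBall ht⟩
    rw [uIoc_of_le hab.le] at hx
    exact Ioc_subset_Icc_self hx
  · filter_upwards [Measure.ae_ne volume b] with x hxb hx t ht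
    rw [uIoc_of_le hab.le] at hx
    have hxt : S ∈ 𝓝 (x, t) := prod_mem_nhds (Icc_mem_nhds hx.1 (lt_of_le_of_ne hx.2 hxb))
      (hU.mem_nhds (hball (Metric.ball_subset_closedBall ht)))
    exact hasDerivAt_comp_prodMk_right_of_mem_nhds
      (hf.differentiableOn one_ne_zero _ (mem_of_mem_nhds hxt)) hxt

section Lyapunov

variable (lam1 lam2 ν a : ℝ) (α β : ℝ → ℝ → ℝ)

noncomputable def lyapDensity (x t : ℝ) : ℝ :=
  Real.exp (-ν * x / lam1) / lam1 * α x t ^ 2 + a * (Real.exp (ν * x / lam2) / lam2) * β x t ^ 2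

noncomputable def lyapFlux (x t : ℝ) : ℝ :=
  -Real.exp (-ν * x / lam1) * α x t ^ 2 + a * Real.exp (ν * x / lam2) * β x t ^ 2

variable {lam1 lam2 ν a α β}

theorem contDiffOn_lyapDensity {n : WithTop ℕ∞} {s : Set (ℝ × ℝ)}
    (hα : ContDiffOn ℝ n (fun p : ℝ × ℝ => α p.1 p.2) s)
    (hβ : ContDiffOn ℝ n (fun p : ℝ × ℝ => β p.1 p.2) s) :
    ContDiffOn ℝ n (fun p : ℝ × ℝ => lyapDensity lam1 lam2 ν a α β p.1 p.2) s := by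
  unfold lyapDensity
  fun_prop

theorem continuousOn_lyapFlux {s : Set (ℝ × ℝ)}
    (hα : ContinuousOn (fun p : ℝ × ℝ => α p.1 p.2) s)
    (hβ : ContinuousOn (fun p : ℝ × ℝ => β p.1 p.2) s) :
    ContinuousOn (fun p : ℝ × ℝ => lyapFlux lam1 lam2 ν a α β p.1 p.2) s := by
  unfold lyapFlux
  fun_prop

theorem hasDerivAt_lyapFlux {x t : ℝ} (h1 : lam1 ≠ 0) (h2 : lam2 ≠ 0)
    (hα : DifferentiableAt ℝ (fun p : ℝ × ℝ => α p.1 p.2) (x, t))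
    (hβ : DifferentiableAt ℝ (fun p : ℝ × ℝ => β p.1 p.2) (x, t))
    (hαpde : deriv (fun s => α x s) t + lam1 * deriv (fun y => α y t) x = 0)
    (hβpde : deriv (fun s => β x s) t - lam2 * deriv (fun y => β y t) x = 0) :
    HasDerivAt (fun y => lyapFlux lam1 lam2 ν a α β y t)
      (deriv (fun s => lyapDensity lam1 lam2 ν a α β x s) t
        + ν * lyapDensity lam1 lam2 ν a α β x t) x := by
  have hαt : HasDerivAt (fun s => α x s) (deriv (fun s => α x s) t) t :=
    (DifferentiableAt.comp (g := fun p : ℝ × ℝ => α p.1 p.2) t hα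
      (by fun_prop : DifferentiableAt ℝ (fun s : ℝ => (x, s)) t)).hasDerivAt
  have hβt : HasDerivAt (fun s => β x s) (deriv (fun s => β x s) t) t :=
    (DifferentiableAt.comp (g := fun p : ℝ × ℝ => β p.1 p.2) t hβ
      (by fun_prop : DifferentiableAt ℝ (fun s : ℝ => (x, s)) t)).hasDerivAt
  have hαx : HasDerivAt (fun y => α y t) (deriv (fun y => α y t) x) x :=
    (DifferentiableAt.comp (g := fun p : ℝ × ℝ => α p.1 p.2) x hα
      (by fun_prop : DifferentiableAt ℝ (fun y : ℝ => (y, t)) x)).hasDerivAt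
  have hβx : HasDerivAt (fun y => β y t) (deriv (fun y => β y t) x) x :=
    (DifferentiableAt.comp (g := fun p : ℝ × ℝ => β p.1 p.2) x hβ
      (by fun_prop : DifferentiableAt ℝ (fun y : ℝ => (y, t)) x)).hasDerivAt
  have hρt := ((hαt.pow 2).const_mul (Real.exp (-ν * x / lam1) / lam1)).add
    ((hβt.pow 2).const_mul (a * (Real.exp (ν * x / lam2) / lam2)))
  have he1 : HasDerivAt (fun y : ℝ => -ν * y / lam1) (-ν / lam1) x := by
    simpa using ((hasDerivAt_id x).const_mul (-ν)).div_const lam1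
  have he2 : HasDerivAt (fun y : ℝ => ν * y / lam2) (ν / lam2) x := by
    simpa using ((hasDerivAt_id x).const_mul ν).div_const lam2
  have hflux := (he1.exp.neg.mul (hαx.pow 2)).add ((he2.exp.const_mul a).mul (hβx.pow 2))
  rw [(show HasDerivAt (fun s => lyapDensity lam1 lam2 ν a α β x s) _ t from hρt).deriv,
    lyapDensity]
  refine (show HasDerivAt (fun y => lyapFlux lam1 lam2 ν a α β y t) _ x from hflux).congr_deriv ?_
  simp only [Pi.pow_apply, Pi.neg_apply]
  rw [show deriv (fun s => α x s) t = -lam1 * deriv (fun y => α y t) x by linarith,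
    show deriv (fun s => β x s) t = lam2 * deriv (fun y => β y t) x by linarith]
  field_simp
  ring

theorem hasDerivAt_lyap {L t : ℝ} (hL : 0 < L) (ht : 0 < t)
    (hα : ContDiffOn ℝ 1 (fun p : ℝ × ℝ => α p.1 p.2) (Icc 0 L ×ˢ Ioi 0))
    (hβ : ContDiffOn ℝ 1 (fun p : ℝ × ℝ => β p.1 p.2) (Icc 0 L ×ˢ Ioi 0))
    (hbalance : ∀ x ∈ Ioo 0 L, HasDerivAt (fun y => lyapFlux lam1 lam2 ν a α β y t)
      (deriv (fun s => lyapDensity lam1 lam2 ν a α β x s) t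
        + ν * lyapDensity lam1 lam2 ν a α β x t) x) :
    HasDerivAt (lyap L lam1 lam2 ν a α β)
      (lyapFlux lam1 lam2 ν a α β L t - lyapFlux lam1 lam2 ν a α β 0 t
        - ν * lyap L lam1 lam2 ν a α β t) t := by
  have hρ := contDiffOn_lyapDensity (lam1 := lam1) (lam2 := lam2) (ν := ν) (a := a) hα hβ
  obtain ⟨hρt_int, hV⟩ := hasDerivAt_intervalIntegral_of_contDiffOn_s10 hL isOpen_Ioi ht hρ
  set ρt := fun x => fderivWithin ℝ (fun p : ℝ × ℝ => lyapDensity lam1 lam2 ν a α β p.1 p.2)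
    (Icc 0 L ×ˢ Ioi 0) (x, t) (0, 1)
  have hρ_int : IntervalIntegrable (fun x => lyapDensity lam1 lam2 ν a α β x t) volume 0 L :=
    (uIcc_of_le hL.le ▸ hρ.continuousOn.comp_prodMk_right ht).intervalIntegrable
  have hflux : ∀ x ∈ Ioo 0 L, HasDerivAt (fun y => lyapFlux lam1 lam2 ν a α β y t)
      (ρt x + ν * lyapDensity lam1 lam2 ν a α β x t) x := by
    intro x hx
    have hxt : Icc 0 L ×ˢ Ioi 0 ∈ 𝓝 (x, t) :=
      prod_mem_nhds (Icc_mem_nhds hx.1 hx.2) (Ioi_mem_nhds ht)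
    rw [show ρt x = deriv (fun s => lyapDensity lam1 lam2 ν a α β x s) t from
      (hasDerivAt_comp_prodMk_right_of_mem_nhds
        (hρ.differentiableOn one_ne_zero _ (mem_of_mem_nhds hxt)) hxt).deriv.symm]
    exact hbalance x hx
  have hFTC := intervalIntegral.integral_eq_sub_of_hasDerivAt_of_le hL.le
    ((continuousOn_lyapFlux hα.continuousOn hβ.continuousOn).comp_prodMk_right ht)
    hflux (hρt_int.add (hρ_int.const_mul ν))
  rw [intervalIntegral.integral_add hρt_int (hρ_int.const_mul ν),
    intervalIntegral.integral_const_mul] at hFTC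
  refine (show HasDerivAt (lyap L lam1 lam2 ν a α β) _ t from hV).congr_deriv ?_
  have hV_eq : lyap L lam1 lam2 ν a α β t = ∫ x in 0..L, lyapDensity lam1 lam2 ν a α β x t := rfl
  rw [hV_eq]
  linear_combination hFTC

end Lyapunov

theorem stmt_10_general (L lam1 lam2 r ν a : ℝ)
    (hL : 0 < L) (h1 : 0 < lam1) (h2 : 0 < lam2)
    (α β : ℝ → ℝ → ℝ)
    (hα : ContDiffOn ℝ 1 (fun p : ℝ × ℝ => α p.1 p.2) (Icc 0 L ×ˢ Ici 0))
    (hβ : ContDiffOn ℝ 1 (fun p : ℝ × ℝ => β p.1 p.2) (Icc 0 L ×ˢ Ici 0))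
    (hαpde : ∀ x ∈ Ioo (0:ℝ) L, ∀ t ∈ Ioi (0:ℝ),
      deriv (fun s => α x s) t + lam1 * deriv (fun y => α y t) x = 0)
    (hβpde : ∀ x ∈ Ioo (0:ℝ) L, ∀ t ∈ Ioi (0:ℝ),
      deriv (fun s => β x s) t - lam2 * deriv (fun y => β y t) x = 0)
    (hbc : ∀ t : ℝ, 0 ≤ t → α 0 t = -r * β 0 t) :
    (∀ t > (0:ℝ),
      HasDerivAt (lyap L lam1 lam2 ν a α β)
        (-ν * lyap L lam1 lam2 ν a α β t + (r ^ 2 - a) * (β 0 t) ^ 2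
          - Real.exp (-ν * L / lam1) * (α L t) ^ 2
          + a * Real.exp (ν * L / lam2) * (β L t) ^ 2) t) ∧
    (a ≥ r ^ 2 → ∀ t > (0:ℝ),
      deriv (lyap L lam1 lam2 ν a α β) t
        ≤ -ν * lyap L lam1 lam2 ν a α β t
          + a * Real.exp (ν * L / lam2) * (β L t) ^ 2) := by
  have hS : Icc 0 L ×ˢ Ioi 0 ⊆ Icc 0 L ×ˢ Ici (0 : ℝ) := prod_mono le_rfl Ioi_subset_Ici_self
  have hdiff {u : ℝ → ℝ → ℝ} (hu : ContDiffOn ℝ 1 (fun p : ℝ × ℝ => u p.1 p.2) (Icc 0 L ×ˢ Ici 0))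
      {x t : ℝ} (hx : x ∈ Ioo 0 L) (ht : 0 < t) :
      DifferentiableAt ℝ (fun p : ℝ × ℝ => u p.1 p.2) (x, t) :=
    (hu.contDiffAt (prod_mem_nhds (Icc_mem_nhds hx.1 hx.2) (Ici_mem_nhds ht))).differentiableAt
      one_ne_zero
  have hderiv : ∀ t > (0:ℝ),
      HasDerivAt (lyap L lam1 lam2 ν a α β)
        (-ν * lyap L lam1 lam2 ν a α β t + (r ^ 2 - a) * (β 0 t) ^ 2
          - Real.exp (-ν * L / lam1) * (α L t) ^ 2
          + a * Real.exp (ν * L / lam2) * (β L t) ^ 2) t := by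
    intro t ht
    refine (hasDerivAt_lyap hL ht (hα.mono hS) (hβ.mono hS) fun x hx =>
      hasDerivAt_lyapFlux h1.ne' h2.ne' (hdiff hα hx ht) (hdiff hβ hx ht)
        (hαpde x hx t ht) (hβpde x hx t ht)).congr_deriv ?_
    simp only [lyapFlux, hbc t ht.le, mul_zero, zero_div, Real.exp_zero]
    ring
  refine ⟨hderiv, fun har t ht => ?_⟩
  rw [(hderiv t ht).deriv]
  have hr : (r ^ 2 - a) * β 0 t ^ 2 ≤ 0 :=
    mul_nonpos_of_nonpos_of_nonneg (by linarith) (sq_nonneg _)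
  have hα_out : 0 ≤ Real.exp (-ν * L / lam1) * α L t ^ 2 := by positivity
  linarith

/-- Lyapunov derivative identity for the target system, and the
resulting differential inequality when `a ≥ r²`. -/
theorem stmt_10 (L lam1 lam2 r ν a : ℝ)
    (hL : 0 < L) (h1 : 0 < lam1) (h2 : 0 < lam2) (hν : 0 < ν) (ha : 0 < a)
    (α β : ℝ → ℝ → ℝ)
    (hα : ContDiffOn ℝ 1 (fun p : ℝ × ℝ => α p.1 p.2) (Icc 0 L ×ˢ Ici 0))
    (hβ : ContDiffOn ℝ 1 (fun p : ℝ × ℝ => β p.1 p.2) (Icc 0 L ×ˢ Ici 0))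
    (hαpde : ∀ x ∈ Ioo (0:ℝ) L, ∀ t ∈ Ioi (0:ℝ),
      deriv (fun s => α x s) t + lam1 * deriv (fun y => α y t) x = 0)
    (hβpde : ∀ x ∈ Ioo (0:ℝ) L, ∀ t ∈ Ioi (0:ℝ),
      deriv (fun s => β x s) t - lam2 * deriv (fun y => β y t) x = 0)
    (hbc : ∀ t : ℝ, 0 ≤ t → α 0 t = -r * β 0 t) :
    (∀ t > (0:ℝ),
      HasDerivAt (lyap L lam1 lam2 ν a α β)
        (-ν * lyap L lam1 lam2 ν a α β t + (r ^ 2 - a) * (β 0 t) ^ 2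
          - Real.exp (-ν * L / lam1) * (α L t) ^ 2
          + a * Real.exp (ν * L / lam2) * (β L t) ^ 2) t) ∧
    (a ≥ r ^ 2 → ∀ t > (0:ℝ),
      deriv (lyap L lam1 lam2 ν a α β) t
        ≤ -ν * lyap L lam1 lam2 ν a α β t
          + a * Real.exp (ν * L / lam2) * (β L t) ^ 2) :=
  stmt_10_general L lam1 lam2 r ν a hL h1 h2 α β hα hβ hαpde hβpde hbc
end

section
/- The backstepping kernel equations have at most one classical solution: if (K^w, K^v) and (J^w, J^v) are two pairs of C¹ functions on 𝒯 each satisfying λ₂ ∂_x K^w − λ₁ ∂_ξ K^w = c(ξ) K^v and ∂_x K^v + ∂_ξ K^v = 0 on 𝒯, together with the boundary conditions K^w(x,x) = −c(x)/(λ₁+λ₂) and K^v(x,0) = −K^w(x,0) for all x ∈ [0,L], then K^w = J^w and K^v = J^v on 𝒯. -/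
/-!
The difference `(w, v)` of two solutions solves the homogeneous system: `v` is transported along
the lines `x - ξ = const` and `w` along the characteristics of direction `(λ₂, -λ₁)`, which run from
the diagonal (where `w = 0`) to the bottom edge (where `v = -w`). Following one `w`-characteristic
from the diagonal down to `(s, 0)` and substituting `v = -w(·, 0)` along it gives a Volterra
inequality `|w(s, 0)| ≤ C ∫₀ˢ |w(u, 0)| du`, so `w(·, 0) = 0` by Grönwall. Then `v = 0` by
transport and `w = 0` by integrating along its characteristics.
-/

open Set Real

section LineIntegral

variable {E F : Type*} [AddCommGroup E] [Module ℝ E] [NormedAddCommGroup F] [NormedSpace ℝ F]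

theorem HasLineDerivAt.hasDerivAt_comp_add_smul {f : E → F} {f' : F} {x v : E} {t : ℝ}
    (hf : HasLineDerivAt ℝ f f' (x + t • v) v) : HasDerivAt (fun s => f (x + s • v)) f' t := by
  have h := HasDerivAt.comp_sub_const t t (by rwa [sub_self])
  refine h.congr_of_eventuallyEq (Filter.Eventually.of_forall fun s => ?_)
  simp only [add_assoc, ← add_smul, add_sub_cancel]

theorem HasLineDerivAt.sub {f g : E → F} {f' g' : F} {x v : E} (hf : HasLineDerivAt ℝ f f' x v)
    (hg : HasLineDerivAt ℝ g g' x v) : HasLineDerivAt ℝ (f - g) (f' - g') x v :=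
  HasDerivAt.sub hf hg

theorem eq_add_integral_of_hasLineDerivAt [CompleteSpace F] {f : E → F} {f' : ℝ → F} {x v : E}
    {T : ℝ} (hT : 0 ≤ T) (hcont : ContinuousOn (fun t => f (x + t • v)) (Icc 0 T))
    (hderiv : ∀ t ∈ Ioo 0 T, HasLineDerivAt ℝ f (f' t) (x + t • v) v)
    (hint : IntervalIntegrable f' MeasureTheory.volume 0 T) :
    f (x + T • v) = f x + ∫ t in 0..T, f' t := by
  rw [intervalIntegral.integral_eq_sub_of_hasDerivAt_of_le hT hcont
    (fun t ht => (hderiv t ht).hasDerivAt_comp_add_smul) hint]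
  simp

end LineIntegral

theorem Continuous.eq_zero_of_abs_le_mul_integral {g : ℝ → ℝ} {C L : ℝ} (hg : Continuous g)
    (hle : ∀ s ∈ Icc 0 L, |g s| ≤ C * ∫ u in 0..s, |g u|) : ∀ s ∈ Icc 0 L, g s = 0 := by
  set G : ℝ → ℝ := fun s => ∫ u in 0..s, |g u|
  have hG : ∀ s, HasDerivAt G |g s| s := fun s =>
    (hg.abs.integral_hasStrictDerivAt 0 s).hasDerivAt
  have hG_nonneg : ∀ s ∈ Icc 0 L, 0 ≤ G s := fun s hs =>
    intervalIntegral.integral_nonneg hs.1 fun _ _ => abs_nonneg _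
  have hG_zero : ∀ s ∈ Icc 0 L, G s = 0 :=
    eq_zero_of_abs_deriv_le_mul_abs_self_of_eq_zero_right (K := C)
      (fun s _ => (hG s).continuousAt.continuousWithinAt) (fun s _ => (hG s).hasDerivWithinAt)
      intervalIntegral.integral_same fun s hs => by
        rw [Real.norm_eq_abs, abs_abs, Real.norm_of_nonneg (hG_nonneg s (Ico_subset_Icc_self hs))]
        exact hle s (Ico_subset_Icc_self hs)
  intro s hs
  simpa [G, hG_zero s hs] using hle s hs

theorem ContinuousOn.eq_zero_of_abs_le_mul_integral {g : ℝ → ℝ} {C L : ℝ}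
    (hg : ContinuousOn g (Icc 0 L))
    (hle : ∀ s ∈ Icc 0 L, |g s| ≤ C * ∫ u in 0..s, |g u|) : ∀ s ∈ Icc 0 L, g s = 0 := by
  intro s hs
  have hL : 0 ≤ L := hs.1.trans hs.2
  set g' : ℝ → ℝ := fun u => g (projIcc 0 L hL u)
  have hg' : ∀ u ∈ Icc 0 L, g' u = g u := fun u hu => by simp [g', projIcc_of_mem hL hu]
  have hg'_cont : Continuous g' :=
    hg.comp_continuous (continuous_subtype_val.comp continuous_projIcc) fun u =>
      (projIcc 0 L hL u).2
  rw [← hg' s hs]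
  refine hg'_cont.eq_zero_of_abs_le_mul_integral (C := C) (fun u hu => ?_) s hs
  rw [hg' u hu, intervalIntegral.integral_congr fun r hr => ?_]
  · exact hle u hu
  · rw [uIcc_of_le hu.1] at hr
    simp only [hg' r ⟨hr.1, hr.2.trans hu.2⟩]

theorem DifferentiableAt.hasLineDerivAt_uncurry {F : ℝ → ℝ → ℝ} {x ξ : ℝ}
    (hF : DifferentiableAt ℝ (Function.uncurry F) (x, ξ)) (a b : ℝ) :
    HasLineDerivAt ℝ (Function.uncurry F)
      (a * deriv (fun y => F y ξ) x + b * deriv (F x) ξ) (x, ξ) (a, b) := by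
  have hx : HasDerivAt (fun y => F y ξ) (fderiv ℝ (Function.uncurry F) (x, ξ) (1, 0)) x :=
    hF.hasFDerivAt.comp_hasDerivAt (f := fun y => (y, ξ)) x
      ((hasDerivAt_id x).prodMk (hasDerivAt_const x ξ))
  have hξ : HasDerivAt (F x) (fderiv ℝ (Function.uncurry F) (x, ξ) (0, 1)) ξ :=
    hF.hasFDerivAt.comp_hasDerivAt (f := fun s => (x, s)) ξ
      ((hasDerivAt_const ξ x).prodMk (hasDerivAt_id ξ))
  have hab : ((a, b) : ℝ × ℝ) = a • (1, 0) + b • (0, 1) := by simp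
  rw [hx.deriv, hξ.deriv, ← smul_eq_mul, ← smul_eq_mul, ← map_smul, ← map_smul, ← map_add, ← hab]
  exact hF.hasFDerivAt.hasLineDerivAt (a, b)

namespace Backstepping

def triangle (L : ℝ) : Set (ℝ × ℝ) := {p | 0 ≤ p.2 ∧ p.2 ≤ p.1 ∧ p.1 ≤ L}

def openTriangle (L : ℝ) : Set (ℝ × ℝ) := {p | 0 < p.2 ∧ p.2 < p.1 ∧ p.1 < L}

theorem differentiableAt_of_mem_openTriangle {L : ℝ} {f : ℝ × ℝ → ℝ}
    (hf : ContDiffOn ℝ 1 f (triangle L)) {p : ℝ × ℝ} (hp : p ∈ openTriangle L) :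
    DifferentiableAt ℝ f p := by
  have hopen : IsOpen (openTriangle L) :=
    (isOpen_lt continuous_const continuous_snd).inter
      ((isOpen_lt continuous_snd continuous_fst).inter (isOpen_lt continuous_fst continuous_const))
  refine (hf.contDiffAt ?_).differentiableAt one_ne_zero
  exact Filter.mem_of_superset (hopen.mem_nhds hp) fun q hq => ⟨hq.1.le, hq.2.1.le, hq.2.2.le⟩

structure IsHomogeneousKernelSolution (L lam1 lam2 : ℝ) (c : ℝ → ℝ) (w v : ℝ × ℝ → ℝ) :
    Prop where
  continuousOn_w : ContinuousOn w (triangle L)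
  continuousOn_v : ContinuousOn v (triangle L)
  hasLineDerivAt_w : ∀ p ∈ openTriangle L, HasLineDerivAt ℝ w (c p.2 * v p) p (lam2, -lam1)
  hasLineDerivAt_v : ∀ p ∈ openTriangle L, HasLineDerivAt ℝ v 0 p (1, 1)
  diag : ∀ a ∈ Icc 0 L, w (a, a) = 0
  bot : ∀ s ∈ Icc 0 L, v (s, 0) = -w (s, 0)

namespace IsHomogeneousKernelSolution

variable {L lam1 lam2 : ℝ} {c : ℝ → ℝ} {w v : ℝ × ℝ → ℝ}

theorem v_eq_of_lt (h : IsHomogeneousKernelSolution L lam1 lam2 c w v) {x ξ : ℝ}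
    (hξ : 0 ≤ ξ) (hξx : ξ < x) (hx : x ≤ L) : v (x, ξ) = v (x - ξ, 0) := by
  have hpt : ∀ t : ℝ, (x - ξ, (0 : ℝ)) + t • ((1 : ℝ), (1 : ℝ)) = (x - ξ + t, t) := fun t => by
    simp
  have key := eq_add_integral_of_hasLineDerivAt (f := v) (f' := 0) (x := (x - ξ, 0)) (v := (1, 1))
    hξ ?_ ?_ intervalIntegrable_const
  · simpa [hpt] using key
  · simp only [hpt]
    exact h.continuousOn_v.comp (by fun_prop) fun t ht =>
      ⟨ht.1, by linarith, by linarith [ht.2]⟩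
  · intro t ht
    rw [hpt]
    exact h.hasLineDerivAt_v _ ⟨ht.1, by linarith, by linarith [ht.2]⟩

theorem v_eq (h : IsHomogeneousKernelSolution L lam1 lam2 c w v) {x ξ : ℝ}
    (hp : (x, ξ) ∈ triangle L) : v (x, ξ) = v (x - ξ, 0) := by
  obtain ⟨hξ, hξx, hx⟩ : 0 ≤ ξ ∧ ξ ≤ x ∧ x ≤ L := hp
  rcases hξx.lt_or_eq with hlt | rfl
  · exact h.v_eq_of_lt hξ hlt hx
  rcases hξ.eq_or_lt with rfl | hpos
  · simp
  have hmaps : ∀ t ∈ Icc 0 ξ, (ξ, t) ∈ triangle L ∧ (ξ - t, (0 : ℝ)) ∈ triangle L := fun t ht =>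
    ⟨⟨ht.1, ht.2, hx⟩, ⟨le_rfl, by linarith [ht.2], by linarith [ht.1]⟩⟩
  have hcont₁ : ContinuousOn (fun t => v (ξ, t)) (Icc 0 ξ) :=
    h.continuousOn_v.comp (by fun_prop) fun t ht => (hmaps t ht).1
  have hcont₂ : ContinuousOn (fun t => v (ξ - t, 0)) (Icc 0 ξ) :=
    h.continuousOn_v.comp (by fun_prop) fun t ht => (hmaps t ht).2
  have heq : EqOn (fun t => v (ξ, t)) (fun t => v (ξ - t, 0)) (Ico 0 ξ) := fun t ht =>
    h.v_eq_of_lt ht.1 ht.2 hx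
  exact heq.of_subset_closure hcont₁ hcont₂ Ico_subset_Icc_self (closure_Ico hpos.ne).ge
    (right_mem_Icc.2 hpos.le)

theorem w_eq_integral (h : IsHomogeneousKernelSolution L lam1 lam2 c w v) (h1 : 0 < lam1)
    (h2 : 0 < lam2) (hc : Continuous c) {a T : ℝ} (hT : 0 ≤ T) (ha : lam1 * T ≤ a)
    (haL : a + lam2 * T ≤ L) :
    w (a + lam2 * T, a - lam1 * T) =
      ∫ t in 0..T, c (a - lam1 * t) * v (a + lam2 * t, a - lam1 * t) := by
  have hpt : ∀ t : ℝ, (a, a) + t • (lam2, -lam1) = (a + lam2 * t, a - lam1 * t) := fun t => by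
    ext <;> simp <;> ring
  have hmaps : ∀ t ∈ Icc 0 T, (a + lam2 * t, a - lam1 * t) ∈ triangle L := fun t ht =>
    ⟨by nlinarith [ht.2], by nlinarith [ht.1], by nlinarith [ht.2]⟩
  have key := eq_add_integral_of_hasLineDerivAt (f := w) (x := (a, a)) (v := (lam2, -lam1))
    (f' := fun t => c (a - lam1 * t) * v (a + lam2 * t, a - lam1 * t)) hT ?_ ?_ ?_
  · rwa [hpt, h.diag a ⟨by nlinarith, by nlinarith⟩, zero_add] at key
  · simp only [hpt]
    exact h.continuousOn_w.comp (by fun_prop) hmaps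
  · intro t ht
    rw [hpt]
    exact h.hasLineDerivAt_w _ ⟨by nlinarith [ht.2], by nlinarith [ht.1], by nlinarith [ht.2]⟩
  · exact ((hc.comp (by fun_prop)).continuousOn.mul
      (h.continuousOn_v.comp (by fun_prop) hmaps)).intervalIntegrable_of_Icc hT

theorem exists_abs_w_bot_le (h : IsHomogeneousKernelSolution L lam1 lam2 c w v)
    (h1 : 0 < lam1) (h2 : 0 < lam2) (hc : Continuous c) :
    ∃ C, ∀ s ∈ Icc 0 L, |w (s, 0)| ≤ C * ∫ u in 0..s, |w (u, 0)| := by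
  obtain ⟨M, hM⟩ := isCompact_Icc.exists_bound_of_continuousOn (hc.continuousOn (s := Icc 0 L))
  have hμ : 0 < lam1 + lam2 := by positivity
  refine ⟨M * (lam1 + lam2)⁻¹, fun s hs => ?_⟩
  -- the `w`-characteristic ending at `(s, 0)` leaves the diagonal at `(lam1 * T, lam1 * T)`
  set T := s / (lam1 + lam2)
  have hT : 0 ≤ T := div_nonneg hs.1 hμ.le
  have hsT : (lam1 + lam2) * T = s := mul_div_cancel₀ _ hμ.ne'
  have hw_bot : ContinuousOn (fun t => w ((lam1 + lam2) * t, 0)) (Icc 0 T) :=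
    h.continuousOn_w.comp (by fun_prop) fun t ht =>
      ⟨le_rfl, by nlinarith [ht.1], by nlinarith [ht.2, hs.2]⟩
  have hc_char : ContinuousOn (fun t => c (lam1 * T - lam1 * t)) (Icc 0 T) :=
    (hc.comp (by fun_prop)).continuousOn
  have hv_char : EqOn (fun t => v (lam1 * T + lam2 * t, lam1 * T - lam1 * t))
      (fun t => -w ((lam1 + lam2) * t, 0)) (uIcc 0 T) := fun t ht => by
    rw [uIcc_of_le hT] at ht
    dsimp only
    have hdiff : lam1 * T + lam2 * t - (lam1 * T - lam1 * t) = (lam1 + lam2) * t := by ring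
    have htT := mul_le_mul_of_nonneg_left ht.2 hμ.le
    rw [h.v_eq ⟨by nlinarith [ht.2], by nlinarith [ht.1], by nlinarith [hs.2]⟩, hdiff,
      h.bot _ ⟨by nlinarith [ht.1], by linarith [hs.2]⟩]
  have hw_s : w (s, 0) = ∫ t in 0..T, c (lam1 * T - lam1 * t) * -w ((lam1 + lam2) * t, 0) := by
    have key := h.w_eq_integral h1 h2 hc hT le_rfl (by linarith [hs.2])
    rwa [show lam1 * T + lam2 * T = s by linarith, sub_self,
      intervalIntegral.integral_congr fun t ht => congrArg _ (hv_char ht)] at key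
  calc |w (s, 0)|
      ≤ ∫ t in 0..T, |c (lam1 * T - lam1 * t) * -w ((lam1 + lam2) * t, 0)| := by
        rw [hw_s]; exact intervalIntegral.abs_integral_le_integral_abs hT
    _ ≤ ∫ t in 0..T, M * |w ((lam1 + lam2) * t, 0)| := by
        refine intervalIntegral.integral_mono_on hT
          ((hc_char.mul hw_bot.neg).abs.intervalIntegrable_of_Icc hT)
          ((hw_bot.abs.const_smul M).intervalIntegrable_of_Icc hT) fun t ht => ?_
        rw [abs_mul, abs_neg]
        refine mul_le_mul_of_nonneg_right ?_ (abs_nonneg _)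
        exact (Real.norm_eq_abs _).symm.trans_le
          (hM _ ⟨by nlinarith [ht.2], by nlinarith [ht.1, hs.2]⟩)
    _ = M * (lam1 + lam2)⁻¹ * ∫ u in 0..s, |w (u, 0)| := by
        rw [intervalIntegral.integral_const_mul,
          intervalIntegral.integral_comp_mul_left (fun u => |w (u, 0)|) hμ.ne', mul_zero, hsT,
          smul_eq_mul, mul_assoc]

theorem w_bot_eq_zero (h : IsHomogeneousKernelSolution L lam1 lam2 c w v) (h1 : 0 < lam1)
    (h2 : 0 < lam2) (hc : Continuous c) : ∀ s ∈ Icc 0 L, w (s, 0) = 0 :=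
  have ⟨_, hC⟩ := h.exists_abs_w_bot_le h1 h2 hc
  ContinuousOn.eq_zero_of_abs_le_mul_integral
    (h.continuousOn_w.comp (by fun_prop) fun s hs => ⟨le_rfl, hs.1, hs.2⟩) hC

theorem v_eq_zero (h : IsHomogeneousKernelSolution L lam1 lam2 c w v) (h1 : 0 < lam1)
    (h2 : 0 < lam2) (hc : Continuous c) {x ξ : ℝ} (hp : (x, ξ) ∈ triangle L) : v (x, ξ) = 0 := by
  obtain ⟨hξ, hξx, hx⟩ := hp
  have hbot : x - ξ ∈ Icc 0 L := ⟨by linarith, by linarith⟩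
  rw [h.v_eq ⟨hξ, hξx, hx⟩, h.bot _ hbot, h.w_bot_eq_zero h1 h2 hc _ hbot, neg_zero]

theorem w_eq_zero (h : IsHomogeneousKernelSolution L lam1 lam2 c w v) (h1 : 0 < lam1)
    (h2 : 0 < lam2) (hc : Continuous c) {x ξ : ℝ} (hp : (x, ξ) ∈ triangle L) : w (x, ξ) = 0 := by
  obtain ⟨hξ, hξx, hx⟩ : 0 ≤ ξ ∧ ξ ≤ x ∧ x ≤ L := hp
  have hμ : 0 < lam1 + lam2 := by positivity
  -- the `w`-characteristic through `(x, ξ)` leaves the diagonal at `(ξ + lam1 * T, ξ + lam1 * T)`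
  set T := (x - ξ) / (lam1 + lam2)
  have hT : 0 ≤ T := div_nonneg (by linarith) hμ.le
  have hμT : (lam1 + lam2) * T = x - ξ := mul_div_cancel₀ _ hμ.ne'
  have key := h.w_eq_integral h1 h2 hc (a := ξ + lam1 * T) hT (by linarith) (by linarith)
  rw [show ξ + lam1 * T + lam2 * T = x by linarith, add_sub_cancel_right] at key
  rw [key, intervalIntegral.integral_congr (g := fun _ => 0) fun t ht => ?_,
    intervalIntegral.integral_zero]
  rw [uIcc_of_le hT] at ht
  have hv : v (ξ + lam1 * T + lam2 * t, ξ + lam1 * T - lam1 * t) = 0 :=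
    h.v_eq_zero h1 h2 hc ⟨by nlinarith [ht.2], by nlinarith [ht.1], by nlinarith [ht.2]⟩
  rw [hv, mul_zero]

end IsHomogeneousKernelSolution

structure IsKernelSolution (L lam1 lam2 : ℝ) (c : ℝ → ℝ) (Kw Kv : ℝ → ℝ → ℝ) : Prop where
  contDiffOn_w : ContDiffOn ℝ 1 (Function.uncurry Kw) (triangle L)
  contDiffOn_v : ContDiffOn ℝ 1 (Function.uncurry Kv) (triangle L)
  deriv_w : ∀ x ξ, 0 ≤ ξ → ξ ≤ x → x ≤ L →
    lam2 * deriv (fun y => Kw y ξ) x - lam1 * deriv (Kw x) ξ = c ξ * Kv x ξ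
  deriv_v : ∀ x ξ, 0 ≤ ξ → ξ ≤ x → x ≤ L → deriv (fun y => Kv y ξ) x + deriv (Kv x) ξ = 0
  diag : ∀ x ∈ Icc 0 L, Kw x x = -c x / (lam1 + lam2)
  bot : ∀ x ∈ Icc 0 L, Kv x 0 = -Kw x 0

theorem IsKernelSolution.sub {L lam1 lam2 : ℝ} {c : ℝ → ℝ} {Kw Kv Jw Jv : ℝ → ℝ → ℝ}
    (hK : IsKernelSolution L lam1 lam2 c Kw Kv) (hJ : IsKernelSolution L lam1 lam2 c Jw Jv) :
    IsHomogeneousKernelSolution L lam1 lam2 c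
      (Function.uncurry Kw - Function.uncurry Jw) (Function.uncurry Kv - Function.uncurry Jv) where
  continuousOn_w := hK.contDiffOn_w.continuousOn.sub hJ.contDiffOn_w.continuousOn
  continuousOn_v := hK.contDiffOn_v.continuousOn.sub hJ.contDiffOn_v.continuousOn
  hasLineDerivAt_w := by
    rintro ⟨x, ξ⟩ hp
    have hKw := (differentiableAt_of_mem_openTriangle hK.contDiffOn_w hp).hasLineDerivAt_uncurry
      lam2 (-lam1)
    have hJw := (differentiableAt_of_mem_openTriangle hJ.contDiffOn_w hp).hasLineDerivAt_uncurry
      lam2 (-lam1)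
    convert hKw.sub hJw using 1
    simp only [Pi.sub_apply, Function.uncurry_apply_pair]
    linear_combination hJ.deriv_w x ξ hp.1.le hp.2.1.le hp.2.2.le -
      hK.deriv_w x ξ hp.1.le hp.2.1.le hp.2.2.le
  hasLineDerivAt_v := by
    rintro ⟨x, ξ⟩ hp
    have hKv := (differentiableAt_of_mem_openTriangle hK.contDiffOn_v hp).hasLineDerivAt_uncurry
      1 1
    have hJv := (differentiableAt_of_mem_openTriangle hJ.contDiffOn_v hp).hasLineDerivAt_uncurry
      1 1
    convert hKv.sub hJv using 1
    linear_combination hJ.deriv_v x ξ hp.1.le hp.2.1.le hp.2.2.le -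
      hK.deriv_v x ξ hp.1.le hp.2.1.le hp.2.2.le
  diag a ha := by simp [hK.diag a ha, hJ.diag a ha]
  bot s hs := by
    simp only [Pi.sub_apply, Function.uncurry_apply_pair, hK.bot s hs, hJ.bot s hs]
    ring

end Backstepping

theorem stmt_16_general (L lam1 lam2 τ vs : ℝ)
    (h1 : 0 < lam1) (h2 : 0 < lam2)
    (Kw Kv Jw Jv : ℝ → ℝ → ℝ)
    (hKwC1 : ContDiffOn ℝ 1 (fun p : ℝ × ℝ => Kw p.1 p.2)
      {p : ℝ × ℝ | 0 ≤ p.2 ∧ p.2 ≤ p.1 ∧ p.1 ≤ L})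
    (hKvC1 : ContDiffOn ℝ 1 (fun p : ℝ × ℝ => Kv p.1 p.2)
      {p : ℝ × ℝ | 0 ≤ p.2 ∧ p.2 ≤ p.1 ∧ p.1 ≤ L})
    (hJwC1 : ContDiffOn ℝ 1 (fun p : ℝ × ℝ => Jw p.1 p.2)
      {p : ℝ × ℝ | 0 ≤ p.2 ∧ p.2 ≤ p.1 ∧ p.1 ≤ L})
    (hJvC1 : ContDiffOn ℝ 1 (fun p : ℝ × ℝ => Jv p.1 p.2)
      {p : ℝ × ℝ | 0 ≤ p.2 ∧ p.2 ≤ p.1 ∧ p.1 ≤ L})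
    (hK1 : ∀ x ξ : ℝ, 0 ≤ ξ → ξ ≤ x → x ≤ L →
      lam2 * deriv (fun y => Kw y ξ) x - lam1 * deriv (fun s => Kw x s) ξ
        = (-(1 / τ) * Real.exp (-ξ / (τ * vs))) * Kv x ξ)
    (hK2 : ∀ x ξ : ℝ, 0 ≤ ξ → ξ ≤ x → x ≤ L →
      deriv (fun y => Kv y ξ) x + deriv (fun s => Kv x s) ξ = 0)
    (hK3 : ∀ x ∈ Icc (0:ℝ) L,
      Kw x x = -(-(1 / τ) * Real.exp (-x / (τ * vs))) / (lam1 + lam2))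
    (hK4 : ∀ x ∈ Icc (0:ℝ) L, Kv x 0 = -Kw x 0)
    (hJ1 : ∀ x ξ : ℝ, 0 ≤ ξ → ξ ≤ x → x ≤ L →
      lam2 * deriv (fun y => Jw y ξ) x - lam1 * deriv (fun s => Jw x s) ξ
        = (-(1 / τ) * Real.exp (-ξ / (τ * vs))) * Jv x ξ)
    (hJ2 : ∀ x ξ : ℝ, 0 ≤ ξ → ξ ≤ x → x ≤ L →
      deriv (fun y => Jv y ξ) x + deriv (fun s => Jv x s) ξ = 0)
    (hJ3 : ∀ x ∈ Icc (0:ℝ) L,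
      Jw x x = -(-(1 / τ) * Real.exp (-x / (τ * vs))) / (lam1 + lam2))
    (hJ4 : ∀ x ∈ Icc (0:ℝ) L, Jv x 0 = -Jw x 0) :
    ∀ x ξ : ℝ, 0 ≤ ξ → ξ ≤ x → x ≤ L →
      Kw x ξ = Jw x ξ ∧ Kv x ξ = Jv x ξ := by
  set c : ℝ → ℝ := fun r => -(1 / τ) * Real.exp (-r / (τ * vs))
  have hc : Continuous c := by fun_prop
  have hK : Backstepping.IsKernelSolution L lam1 lam2 c Kw Kv := ⟨hKwC1, hKvC1, hK1, hK2, hK3, hK4⟩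
  have hJ : Backstepping.IsKernelSolution L lam1 lam2 c Jw Jv := ⟨hJwC1, hJvC1, hJ1, hJ2, hJ3, hJ4⟩
  intro x ξ hξ hξx hx
  have hw := (hK.sub hJ).w_eq_zero h1 h2 hc ⟨hξ, hξx, hx⟩
  have hv := (hK.sub hJ).v_eq_zero h1 h2 hc ⟨hξ, hξx, hx⟩
  exact ⟨sub_eq_zero.1 hw, sub_eq_zero.1 hv⟩

/-- uniqueness of classical solutions of the backstepping kernel
equations on the triangle `𝒯 = {(x,ξ) : 0 ≤ ξ ≤ x ≤ L}`, with
`c(x) = −(1/τ) e^{−x/(τ v*)}`. -/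
theorem stmt_16 (L lam1 lam2 τ vs : ℝ)
    (hL : 0 < L) (h1 : 0 < lam1) (h2 : 0 < lam2) (hτ : 0 < τ) (hvs : 0 < vs)
    (Kw Kv Jw Jv : ℝ → ℝ → ℝ)
    (hKwC1 : ContDiffOn ℝ 1 (fun p : ℝ × ℝ => Kw p.1 p.2)
      {p : ℝ × ℝ | 0 ≤ p.2 ∧ p.2 ≤ p.1 ∧ p.1 ≤ L})
    (hKvC1 : ContDiffOn ℝ 1 (fun p : ℝ × ℝ => Kv p.1 p.2)
      {p : ℝ × ℝ | 0 ≤ p.2 ∧ p.2 ≤ p.1 ∧ p.1 ≤ L})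
    (hJwC1 : ContDiffOn ℝ 1 (fun p : ℝ × ℝ => Jw p.1 p.2)
      {p : ℝ × ℝ | 0 ≤ p.2 ∧ p.2 ≤ p.1 ∧ p.1 ≤ L})
    (hJvC1 : ContDiffOn ℝ 1 (fun p : ℝ × ℝ => Jv p.1 p.2)
      {p : ℝ × ℝ | 0 ≤ p.2 ∧ p.2 ≤ p.1 ∧ p.1 ≤ L})
    (hK1 : ∀ x ξ : ℝ, 0 ≤ ξ → ξ ≤ x → x ≤ L →
      lam2 * deriv (fun y => Kw y ξ) x - lam1 * deriv (fun s => Kw x s) ξ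
        = (-(1 / τ) * Real.exp (-ξ / (τ * vs))) * Kv x ξ)
    (hK2 : ∀ x ξ : ℝ, 0 ≤ ξ → ξ ≤ x → x ≤ L →
      deriv (fun y => Kv y ξ) x + deriv (fun s => Kv x s) ξ = 0)
    (hK3 : ∀ x ∈ Icc (0:ℝ) L,
      Kw x x = -(-(1 / τ) * Real.exp (-x / (τ * vs))) / (lam1 + lam2))
    (hK4 : ∀ x ∈ Icc (0:ℝ) L, Kv x 0 = -Kw x 0)
    (hJ1 : ∀ x ξ : ℝ, 0 ≤ ξ → ξ ≤ x → x ≤ L →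
      lam2 * deriv (fun y => Jw y ξ) x - lam1 * deriv (fun s => Jw x s) ξ
        = (-(1 / τ) * Real.exp (-ξ / (τ * vs))) * Jv x ξ)
    (hJ2 : ∀ x ξ : ℝ, 0 ≤ ξ → ξ ≤ x → x ≤ L →
      deriv (fun y => Jv y ξ) x + deriv (fun s => Jv x s) ξ = 0)
    (hJ3 : ∀ x ∈ Icc (0:ℝ) L,
      Jw x x = -(-(1 / τ) * Real.exp (-x / (τ * vs))) / (lam1 + lam2))
    (hJ4 : ∀ x ∈ Icc (0:ℝ) L, Jv x 0 = -Jw x 0) :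
    ∀ x ξ : ℝ, 0 ≤ ξ → ξ ≤ x → x ≤ L →
      Kw x ξ = Jw x ξ ∧ Kv x ξ = Jv x ξ :=
  stmt_16_general L lam1 lam2 τ vs h1 h2 Kw Kv Jw Jv hKwC1 hKvC1 hJwC1 hJvC1 hK1 hK2 hK3 hK4 hJ1 hJ2
    hJ3 hJ4
end
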